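/- arXiv:2205.01185 — 10 statements merged into one kernel-verified Lean document; each statement's English description precedes it below -/
import Mathlib

section
/- Let $f(z)=z^2$ be the angle-doubling map on the unit circle $\mathbb{S}^1 \subseteq \mathbb{C}$. Then for any metric $d$ on $\mathbb{S}^1$ inducing the standard topology, the Lipschitz constant of $f$ with respect to $d$ is strictly greater than $1$; i.e., there exist $x,y \in \mathbb{S}^1$ with $d(f(x),f(y)) > d(x,y)$. -/
lemma circle_exp_pow (x : ℝ) (n : ℕ) : (Circle.exp x) ^ n = Circle.exp (n * x) := by
  induction n with
  | zero => simp [Circle.exp_zero]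
  | succ n ih =>
    rw [pow_succ, ih, ← Circle.exp_add]
    push_cast
    ring_nf

/-- For the angle-doubling map `f z = z ^ 2` on the unit circle, and any metric `d`
on the circle inducing the standard topology, there exist points `x, y` with
`d (f x) (f y) > d x y`; in particular `Lip(f, d) > 1`. -/
theorem doubling_map_not_nonexpansive
    (m : MetricSpace Circle)
    (hcompat : m.toPseudoMetricSpace.toUniformSpace.toTopologicalSpace
      = (inferInstance : TopologicalSpace Circle)) :
    ∃ x y : Circle,
      @dist Circle m.toPseudoMetricSpace.toDist (x ^ 2) (y ^ 2) >
        @dist Circle m.toPseudoMetricSpace.toDist x y := by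
  by_contra hcon
  push_neg at hcon
  -- work with the metric `m`
  letI := m
  have h2 : ∀ x y : Circle, dist (x ^ 2) (y ^ 2) ≤ dist x y := hcon
  have key : ∀ (n : ℕ) (x y : Circle), dist (x ^ (2 ^ n)) (y ^ (2 ^ n)) ≤ dist x y := by
    intro n
    induction n with
    | zero => simp
    | succ n ih =>
      intro x y
      have : (x : Circle) ^ (2 ^ (n + 1)) = (x ^ 2) ^ (2 ^ n) := by
        rw [← pow_mul, pow_succ, mul_comm]
      rw [this, show (y : Circle) ^ (2 ^ (n + 1)) = (y ^ 2) ^ (2 ^ n) by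
        rw [← pow_mul, pow_succ, mul_comm]]
      exact (ih (x ^ 2) (y ^ 2)).trans (h2 x y)
  set yn : ℕ → Circle := fun n => Circle.exp (Real.pi / 2 ^ n) with hyn
  have hpow : ∀ n : ℕ, (yn n) ^ (2 ^ n) = Circle.exp Real.pi := by
    intro n
    rw [hyn]
    simp only
    rw [circle_exp_pow]
    congr 1
    field_simp
    norm_cast
  -- yn tends to 1 in the standard topology
  have htend : Filter.Tendsto yn Filter.atTop (@nhds Circle inferInstance 1) := by
    have h0 : Filter.Tendsto (fun n : ℕ => Real.pi / 2 ^ n) Filter.atTop (nhds 0) :=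
      tendsto_const_nhds.div_atTop (tendsto_pow_atTop_atTop_of_one_lt one_lt_two)
    have := (Circle.exp.continuous.tendsto 0).comp h0
    rwa [Circle.exp_zero] at this
  -- hence in the topology of `m`
  have htend' : Filter.Tendsto yn Filter.atTop
      (@nhds Circle m.toPseudoMetricSpace.toUniformSpace.toTopologicalSpace 1) := by
    rw [hcompat]; exact htend
  have hd0 : Filter.Tendsto (fun n => dist (yn n) (1 : Circle)) Filter.atTop (nhds 0) :=
    (tendsto_iff_dist_tendsto_zero).mp htend'
  have hle : ∀ n : ℕ, dist (Circle.exp Real.pi) (1 : Circle) ≤ dist (yn n) 1 := by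
    intro n
    have := key n (yn n) 1
    rwa [hpow n, one_pow] at this
  have hfin : dist (Circle.exp Real.pi) (1 : Circle) ≤ 0 :=
    le_of_tendsto_of_tendsto' tendsto_const_nhds hd0 hle
  have heq : Circle.exp Real.pi = 1 :=
    dist_le_zero.mp hfin
  have : (Circle.exp Real.pi : ℂ) = 1 := by rw [heq]; rfl
  rw [Circle.coe_exp, Complex.exp_pi_mul_I] at this
  norm_num at this
end

section
/- Let $\alpha$ be such that $\alpha/(2\pi)$ is irrational, let $\rho(z) = e^{i\alpha}z$, $f(z) = z^2$, and $F = \{f, \rho, \mathrm{id}\}$ as an iterated function system on $\mathbb{S}^1$. Then for every $z \in \mathbb{S}^1$, the iterates $F^{(n)}(\{z\})$ converge to $\mathbb{S}^1$ in the Hausdorff metric; consequently $\mathbb{S}^1$ is the attractor of $F$. -/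
open Filter Metric

private lemma dense_orbit_aux (α : ℝ) (hα : Irrational (α / (2 * Real.pi))) :
    DenseRange (fun n : ℕ => (Circle.exp α) ^ n) := by
  rw [← denseRange_zpow_iff_pow]
  -- the subgroup generated by α and 2π is dense in ℝ
  have hD : Dense ((AddSubgroup.closure {α, 2 * Real.pi} : AddSubgroup ℝ) : Set ℝ) := by
    rcases (AddSubgroup.closure {α, 2 * Real.pi}).dense_or_cyclic with h | ⟨a, ha⟩
    · exact h
    · exfalso
      have hαmem : α ∈ AddSubgroup.closure ({α, 2 * Real.pi} : Set ℝ) :=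
        AddSubgroup.subset_closure (by simp)
      have hπmem : 2 * Real.pi ∈ AddSubgroup.closure ({α, 2 * Real.pi} : Set ℝ) :=
        AddSubgroup.subset_closure (by simp)
      rw [ha] at hαmem hπmem
      obtain ⟨m, hm⟩ := AddSubgroup.mem_closure_singleton.mp hαmem
      obtain ⟨n, hn⟩ := AddSubgroup.mem_closure_singleton.mp hπmem
      have h2π : (2 : ℝ) * Real.pi ≠ 0 := by positivity
      have ha0 : a ≠ 0 := by
        rintro rfl; rw [smul_zero] at hn; exact h2π hn.symm
      have hn0 : (n : ℝ) ≠ 0 := by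
        rintro h; rw [zsmul_eq_mul, h, zero_mul] at hn; exact h2π hn.symm
      apply hα
      refine ⟨(m : ℚ) / (n : ℚ), ?_⟩
      rw [zsmul_eq_mul] at hm hn
      push_cast
      rw [← hm, ← hn, mul_div_mul_right _ _ ha0]
  -- the exponential maps this subgroup into the powers of exp α
  have himg : ∀ x ∈ (AddSubgroup.closure ({α, 2 * Real.pi} : Set ℝ)),
      ∃ m : ℤ, Circle.exp x = (Circle.exp α) ^ m := by
    intro x hx
    induction hx using AddSubgroup.closure_induction with
    | mem y hy =>
      rcases hy with rfl | rfl
      · exact ⟨1, (zpow_one _).symm⟩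
      · exact ⟨0, by simp⟩
    | zero => exact ⟨0, by simp⟩
    | add y z hy hz ihy ihz =>
      obtain ⟨my, hmy⟩ := ihy; obtain ⟨mz, hmz⟩ := ihz
      exact ⟨my + mz, by rw [Circle.exp_add, hmy, hmz, zpow_add]⟩
    | neg y hy ihy =>
      obtain ⟨my, hmy⟩ := ihy
      exact ⟨-my, by rw [Circle.exp_neg, hmy, zpow_neg]⟩
  -- conclude density of the integer powers
  intro c
  have hc : c ∈ Circle.exp '' closure ((AddSubgroup.closure {α, 2 * Real.pi} : AddSubgroup ℝ) : Set ℝ) := by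
    rw [hD.closure_eq]
    exact ⟨Complex.arg c, trivial, Circle.exp_arg c⟩
  have := image_closure_subset_closure_image (f := Circle.exp) Circle.exp.continuous hc
  refine closure_mono ?_ this
  rintro w ⟨x, hx, rfl⟩
  obtain ⟨m, hm⟩ := himg x hx
  exact ⟨m, hm.symm⟩

/-- For the IFS `F = {z ↦ z ^ 2, z ↦ exp(iα) * z, id}` on the circle, with `α/(2π)`
irrational, the Hutchinson iterates of any singleton converge to the whole circle in the
Hausdorff metric; consequently the circle is the attractor of `F`. -/
theorem circle_attractor_of_doubling_rotation_id
    (α : ℝ) (hα : Irrational (α / (2 * Real.pi)))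
    (T : Set Circle → Set Circle)
    (hT : ∀ K, T K = (fun z : Circle => z ^ 2) '' K ∪ (fun z : Circle => Circle.exp α * z) '' K ∪ K) :
    (∀ z : Circle,
      Tendsto (fun n : ℕ => hausdorffDist (T^[n] {z}) (Set.univ : Set Circle))
        atTop (nhds 0)) ∧ T Set.univ = Set.univ := by
  constructor
  · intro z
    set s : ℕ → Set Circle := fun n => T^[n] {z} with hs
    have hsub1 : ∀ K, K ⊆ T K := fun K => by rw [hT]; exact Set.subset_union_right
    have hmono : Monotone s := monotone_nat_of_le_succ fun n => by
      rw [hs]; simp only [Function.iterate_succ_apply']; exact hsub1 _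
    have horbmem : ∀ n : ℕ, (Circle.exp α) ^ n * z ∈ s n := by
      intro n
      induction n with
      | zero => simp [hs]
      | succ n ih =>
        have hmem : Circle.exp α * ((Circle.exp α) ^ n * z) ∈ T (s n) := by
          rw [hT]; exact Or.inl (Or.inr ⟨_, ih, rfl⟩)
        have heq : (Circle.exp α) ^ (n + 1) * z = Circle.exp α * ((Circle.exp α) ^ n * z) := by
          rw [pow_succ', mul_assoc]
        rw [hs]; simp only [Function.iterate_succ_apply']
        rw [heq]; exact hmem
    have horb : DenseRange (fun n : ℕ => (Circle.exp α) ^ n * z) := by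
      have hmulz : DenseRange (fun w : Circle => w * z) :=
        (Homeomorph.mulRight z).surjective.denseRange
      exact hmulz.comp (dense_orbit_aux α hα) (Homeomorph.mulRight z).continuous
    have hcov : ∀ ε > 0, ∃ N, ∀ n ≥ N, ∀ y : Circle, ∃ x ∈ s n, dist y x < ε := by
      intro ε hε
      have hUopen : ∀ n, IsOpen (thickening ε (s n)) := fun n => isOpen_thickening
      have hUcov : (Set.univ : Set Circle) ⊆ ⋃ n, thickening ε (s n) := by
        intro y _
        have hy : y ∈ closure (Set.range fun n : ℕ => (Circle.exp α) ^ n * z) := horb y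
        obtain ⟨x, hx, hdx⟩ := Metric.mem_closure_iff.mp hy ε hε
        obtain ⟨k, rfl⟩ := hx
        exact Set.mem_iUnion.mpr ⟨k, Metric.mem_thickening_iff.mpr ⟨_, horbmem k, hdx⟩⟩
      obtain ⟨t, ht⟩ := isCompact_univ.elim_finite_subcover _ hUopen hUcov
      refine ⟨t.sup id, fun n hn y => ?_⟩
      obtain ⟨i, hit, hyi⟩ := Set.mem_iUnion₂.mp (ht (Set.mem_univ y))
      have hin : i ≤ n := le_trans (Finset.le_sup (f := id) hit) hn
      have : y ∈ thickening ε (s n) :=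
        thickening_subset_of_subset ε (hmono hin) hyi
      exact Metric.mem_thickening_iff.mp this
    rw [Metric.tendsto_atTop]
    intro ε hε
    obtain ⟨N, hN⟩ := hcov (ε / 2) (half_pos hε)
    refine ⟨N, fun n hn => ?_⟩
    have hb : hausdorffDist (s n) (Set.univ : Set Circle) ≤ ε / 2 :=
      hausdorffDist_le_of_mem_dist (le_of_lt (half_pos hε))
        (fun x _ => ⟨x, Set.mem_univ x, by rw [dist_self]; positivity⟩)
        (fun y _ => by obtain ⟨x, hx, hd⟩ := hN n hn y; exact ⟨x, hx, hd.le⟩)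
    rw [Real.dist_eq, sub_zero, abs_of_nonneg hausdorffDist_nonneg]
    exact lt_of_le_of_lt hb (half_lt_self hε)
  · rw [hT]; simp
end

section
/- Let $f(z)=z^2$ and $g(z) = e^{i\alpha} z^2$ on $\mathbb{S}^1$, where $\alpha/(2\pi)$ is irrational, and let $F = \{f,g\}$. Then for every $z = e^{i\theta} \in \mathbb{S}^1$ and every $n$, the $n$-th Hutchinson iterate satisfies $F^{(n)}(\{z\}) = \{ e^{i(2^n\theta + m\alpha)} : 0 \le m < 2^n \}$, and $F^{(n)}(\{z\}) \to \mathbb{S}^1$ in the Hausdorff metric as $n \to \infty$. Hence $\mathbb{S}^1$ is the attractor of $F$. -/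
open Filter Metric


lemma myCircle.dist_mul_left (a b c : Circle) : dist (a*b) (a*c) = dist b c := by
  have : ∀ x y : Circle, dist x y = ‖(x:ℂ) - (y:ℂ)‖ := fun x y => by rw [← dist_eq_norm]; rfl
  rw [this, this b c]
  have : ((a*b : Circle):ℂ) - ((a*c : Circle):ℂ) = (a:ℂ) * ((b:ℂ) - (c:ℂ)) := by
    push_cast; ring
  rw [this, norm_mul, Circle.norm_coe, one_mul]

lemma myCircle.exp_nat_mul (α : ℝ) : ∀ n : ℕ, Circle.exp (n * α) = Circle.exp α ^ n := by
  intro n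
  induction n with
  | zero => simp [Circle.exp_zero]
  | succ n ih =>
    push_cast
    rw [add_mul, one_mul, Circle.exp_add, ih, pow_succ]

lemma myCircle.dense_nat_orbit (α : ℝ) (hα : Irrational (α / (2 * Real.pi))) :
    DenseRange (fun n : ℕ => Circle.exp (n * α)) := by
  have h2π : (2 * Real.pi) ≠ 0 := by positivity
  -- the subgroup generated by α and 2π is dense in ℝ
  set S : AddSubgroup ℝ := AddSubgroup.closure {α, 2 * Real.pi} with hS
  have hαS : α ∈ S := AddSubgroup.subset_closure (by simp)
  have hπS : (2 * Real.pi) ∈ S := AddSubgroup.subset_closure (by simp)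
  have hdense : Dense (S : Set ℝ) := by
    rcases S.dense_or_cyclic with h | ⟨a, ha⟩
    · exact h
    · exfalso
      rw [ha] at hαS hπS
      obtain ⟨m, hm⟩ := AddSubgroup.mem_closure_singleton.1 hαS
      obtain ⟨k, hk⟩ := AddSubgroup.mem_closure_singleton.1 hπS
      have ha0 : a ≠ 0 := by
        rintro rfl; rw [smul_zero] at hk; exact h2π hk.symm
      have hk0 : (k : ℝ) ≠ 0 := by
        rintro h0
        rw [← hk, zsmul_eq_mul] at h2π
        rw [h0] at h2π; simp at h2π
      apply hα
      refine ⟨(m : ℚ) / (k : ℚ), ?_⟩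
      push_cast
      rw [← hm, ← hk, zsmul_eq_mul, zsmul_eq_mul, mul_div_mul_right _ _ ha0]
  -- push through exp
  have hsub : Circle.exp '' (S : Set ℝ) ⊆ Set.range ((Circle.exp α) ^ · : ℤ → Circle) := by
    rintro _ ⟨x, hx, rfl⟩
    have : ∃ n : ℤ, Circle.exp x = Circle.exp α ^ n := by
      induction hx using AddSubgroup.closure_induction with
      | mem y hy =>
        rcases hy with rfl | rfl
        · exact ⟨1, (zpow_one _).symm⟩
        · exact ⟨0, by simp [Circle.exp_two_pi]⟩
      | zero => exact ⟨0, by simp [Circle.exp_zero]⟩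
      | add x y _ _ hx hy =>
        obtain ⟨n, hn⟩ := hx; obtain ⟨l, hl⟩ := hy
        exact ⟨n + l, by rw [Circle.exp_add, hn, hl, zpow_add]⟩
      | neg x _ hx =>
        obtain ⟨n, hn⟩ := hx
        refine ⟨-n, ?_⟩
        have : Circle.exp (-x) * Circle.exp x = 1 := by
          rw [← Circle.exp_add, neg_add_cancel, Circle.exp_zero]
        rw [zpow_neg, ← hn, eq_inv_iff_mul_eq_one.2 this]
    obtain ⟨n, hn⟩ := this
    exact ⟨n, hn.symm⟩
  have hzd : DenseRange ((Circle.exp α) ^ · : ℤ → Circle) := by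
    intro u
    have : u ∈ closure (Circle.exp '' (S : Set ℝ)) := by
      have hu : u = Circle.exp (Complex.arg u) := (Circle.exp_arg u).symm
      have harg : Complex.arg u ∈ closure (S : Set ℝ) := hdense _
      have := (image_closure_subset_closure_image Circle.exp.continuous)
        (Set.mem_image_of_mem Circle.exp harg)
      rwa [← hu] at this
    exact closure_mono hsub this
  have := denseRange_zpow_iff_pow.1 hzd
  simpa only [myCircle.exp_nat_mul] using this

lemma myCircle.net (α : ℝ) (hα : Irrational (α / (2 * Real.pi))) {ε : ℝ} (hε : 0 < ε) :
    ∃ N : ℕ, ∀ u : Circle, ∃ m < N, dist u (Circle.exp (m * α)) < ε := by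
  have hd := myCircle.dense_nat_orbit α hα
  obtain ⟨t, ht⟩ := IsCompact.elim_finite_subcover (isCompact_univ (X := Circle))
    (fun m : ℕ => Metric.ball (Circle.exp (m * α)) ε) (fun m => Metric.isOpen_ball)
    (fun u _ => by
      obtain ⟨m, hm⟩ := hd.exists_dist_lt u hε
      exact Set.mem_iUnion.2 ⟨m, Metric.mem_ball.2 hm⟩)
  refine ⟨t.sup id + 1, fun u => ?_⟩
  obtain ⟨m, hmt, hm⟩ := Set.mem_iUnion₂.1 (ht (Set.mem_univ u))
  exact ⟨m, Nat.lt_succ_of_le (Finset.le_sup (f := id) hmt), Metric.mem_ball.1 hm⟩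


lemma myCircle.exp_sq (t : ℝ) : (Circle.exp t) ^ 2 = Circle.exp (2 * t) := by
  rw [pow_two, ← Circle.exp_add, two_mul]

lemma myCircle.iter (α : ℝ) (T : Set Circle → Set Circle)
    (hT : ∀ K, T K = (fun z : Circle => z ^ 2) '' K ∪
      (fun z : Circle => Circle.exp α * z ^ 2) '' K) (θ : ℝ) (n : ℕ) :
    T^[n] {Circle.exp θ}
      = (fun m : ℕ => Circle.exp (2 ^ n * θ + m * α)) '' {m : ℕ | m < 2 ^ n} := by
  induction n with
  | zero =>
    ext x
    simp only [Function.iterate_zero, id_eq, Set.mem_singleton_iff, Set.mem_image,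
      Set.mem_setOf_eq, pow_zero, one_mul]
    constructor
    · rintro rfl; exact ⟨0, by norm_num⟩
    · rintro ⟨m, hm, rfl⟩
      interval_cases m
      norm_num
  | succ n ih =>
    rw [Function.iterate_succ_apply', ih, hT]
    ext x
    simp only [Set.mem_union, Set.mem_image, Set.mem_setOf_eq]
    constructor
    · rintro (⟨_, ⟨k, hk, rfl⟩, rfl⟩ | ⟨_, ⟨k, hk, rfl⟩, rfl⟩)
      · refine ⟨2 * k, by omega, ?_⟩
        rw [myCircle.exp_sq]
        congr 1
        push_cast; ring
      · refine ⟨2 * k + 1, by omega, ?_⟩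
        rw [myCircle.exp_sq, ← Circle.exp_add]
        congr 1
        push_cast; ring
    · rintro ⟨m, hm, rfl⟩
      rcases Nat.even_or_odd m with ⟨k, rfl⟩ | ⟨k, rfl⟩
      · left
        refine ⟨_, ⟨k, by omega, rfl⟩, ?_⟩
        rw [myCircle.exp_sq]
        congr 1
        push_cast; ring
      · right
        refine ⟨_, ⟨k, by omega, rfl⟩, ?_⟩
        rw [myCircle.exp_sq, ← Circle.exp_add]
        congr 1
        push_cast; ring
/-- For the IFS `F = {z ↦ z ^ 2, z ↦ exp(iα) * z ^ 2}` on the circle with `α/(2π)`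
irrational: the `n`-th Hutchinson iterate of the singleton `{exp(iθ)}` equals
`{exp(i(2 ^ n θ + m α)) : 0 ≤ m < 2 ^ n}`, and the iterates of any singleton converge
to the whole circle in the Hausdorff metric; hence the circle is the attractor. -/
theorem circle_attractor_of_two_doubling_maps
    (α : ℝ) (hα : Irrational (α / (2 * Real.pi)))
    (T : Set Circle → Set Circle)
    (hT : ∀ K, T K = (fun z : Circle => z ^ 2) '' K ∪
      (fun z : Circle => Circle.exp α * z ^ 2) '' K) :
    (∀ (θ : ℝ) (n : ℕ),
      T^[n] {Circle.exp θ}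
        = (fun m : ℕ => Circle.exp (2 ^ n * θ + m * α)) '' {m : ℕ | m < 2 ^ n}) ∧
    (∀ z : Circle,
      Tendsto (fun n : ℕ => hausdorffDist (T^[n] {z}) (Set.univ : Set Circle))
        atTop (nhds 0)) ∧
    T Set.univ = Set.univ := by
  refine ⟨myCircle.iter α T hT, ?_, ?_⟩
  · intro z
    set θ := Complex.arg z with hθ
    have hz : Circle.exp θ = z := Circle.exp_arg z
    rw [Metric.tendsto_atTop]
    intro ε hε
    obtain ⟨N, hN⟩ := myCircle.net α hα (half_pos hε)
    refine ⟨N, fun n hn => ?_⟩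
    have h2n : N < 2 ^ n := lt_of_lt_of_le (Nat.lt_two_pow_self (n := N)) (Nat.pow_le_pow_right (by norm_num) hn)
    have hle : hausdorffDist (T^[n] {z}) (Set.univ : Set Circle) ≤ ε / 2 := by
      apply hausdorffDist_le_of_mem_dist (by positivity)
      · intro x _
        exact ⟨x, Set.mem_univ x, by simp; positivity⟩
      · intro u _
        obtain ⟨m, hm, hdist⟩ := hN ((Circle.exp ((2:ℝ) ^ n * θ))⁻¹ * u)
        refine ⟨Circle.exp (2 ^ n * θ + m * α), ?_, ?_⟩
        · rw [← hz, myCircle.iter α T hT]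
          exact ⟨m, lt_trans hm h2n, rfl⟩
        · have hx : Circle.exp (2 ^ n * θ + m * α)
              = Circle.exp ((2:ℝ) ^ n * θ) * Circle.exp (m * α) := Circle.exp_add _ _
          have hu : u = Circle.exp ((2:ℝ) ^ n * θ) * ((Circle.exp ((2:ℝ) ^ n * θ))⁻¹ * u) := by
            rw [← mul_assoc, mul_inv_cancel, one_mul]
          rw [hx]
          calc dist u (Circle.exp ((2:ℝ) ^ n * θ) * Circle.exp (m * α))
              = dist (Circle.exp ((2:ℝ) ^ n * θ) * ((Circle.exp ((2:ℝ) ^ n * θ))⁻¹ * u))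
                  (Circle.exp ((2:ℝ) ^ n * θ) * Circle.exp (m * α)) := by rw [← hu]
            _ = dist ((Circle.exp ((2:ℝ) ^ n * θ))⁻¹ * u) (Circle.exp (m * α)) :=
                myCircle.dist_mul_left _ _ _
            _ ≤ ε / 2 := le_of_lt hdist
    have hnn : 0 ≤ hausdorffDist (T^[n] {z}) (Set.univ : Set Circle) := hausdorffDist_nonneg
    rw [Real.dist_eq, sub_zero, abs_of_nonneg hnn]
    linarith
  · have hsurj : Function.Surjective (fun z : Circle => z ^ 2) := by
      intro w
      refine ⟨Circle.exp (Complex.arg w / 2), ?_⟩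
      show Circle.exp (Complex.arg w / 2) ^ 2 = w
      rw [myCircle.exp_sq, mul_div_cancel₀ _ (two_ne_zero), Circle.exp_arg]
    rw [hT, Set.image_univ, hsurj.range_eq, Set.univ_union]
end

section
/- Let $(\mathbb{X},d)$ be a complete metric space and let $(f_n)$ be a sequence of maps $\mathbb{X} \to \mathbb{X}$, each a Banach contraction (i.e., $\mathrm{Lip}(f_n,d) < 1$), converging uniformly to some function $f$. Then the set $\{x_n : n \in \mathbb{N}\}$ of fixed points of the $f_n$ is bounded. -/
open Filter

/-- If a sequence of Banach contractions on a complete metric space converges uniformly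
to some function, then the set of their fixed points is bounded. -/
theorem fixedPoints_bounded_of_tendstoUniformly
    {X : Type*} [MetricSpace X] [CompleteSpace X]
    (f : ℕ → X → X) (flim : X → X)
    (K : ℕ → NNReal) (hK : ∀ n, K n < 1) (hf : ∀ n, LipschitzWith (K n) (f n))
    (hconv : TendstoUniformly f flim atTop)
    (x : ℕ → X) (hx : ∀ n, Function.IsFixedPt (f n) (x n)) :
    Bornology.IsBounded (Set.range x) := by
  have h := (Metric.tendstoUniformly_iff.mp hconv) 1 one_pos
  rw [eventually_atTop] at h
  obtain ⟨N, hN⟩ := h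
  have hKN : (K N : ℝ) < 1 := by exact_mod_cast hK N
  set C : ℝ := 2 / (1 - K N) with hC
  have key : ∀ n, N ≤ n → dist (x n) (x N) ≤ C := by
    intro n hn
    have h1 : dist (f n (x n)) (f N (x n)) ≤ 2 := by
      calc dist (f n (x n)) (f N (x n))
          ≤ dist (f n (x n)) (flim (x n)) + dist (flim (x n)) (f N (x n)) :=
            dist_triangle _ _ _
        _ ≤ 1 + 1 := by
            have a := hN n hn (x n)
            have b := hN N le_rfl (x n)
            rw [dist_comm] at a
            linarith
        _ = 2 := by norm_num
    have h2 : dist (x n) (x N) ≤ 2 + K N * dist (x n) (x N) := by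
      calc dist (x n) (x N) = dist (f n (x n)) (f N (x N)) := by rw [hx n, hx N]
        _ ≤ dist (f n (x n)) (f N (x n)) + dist (f N (x n)) (f N (x N)) :=
            dist_triangle _ _ _
        _ ≤ 2 + K N * dist (x n) (x N) := by
            have := (hf N).dist_le_mul (x n) (x N)
            linarith
    rw [hC, le_div_iff₀ (by linarith)]
    nlinarith
  have hsub : Set.range x ⊆ (x '' Set.Iio N) ∪ Metric.closedBall (x N) C := by
    rintro _ ⟨n, rfl⟩
    rcases lt_or_ge n N with h | h
    · exact Or.inl ⟨n, h, rfl⟩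
    · exact Or.inr (Metric.mem_closedBall.mpr (key n h))
  exact (Bornology.IsBounded.union ((Set.finite_Iio N).image x).isBounded
    Metric.isBounded_closedBall).subset hsub
end

section
/- Let $G = \{g_i : i \in I\}$ and $H = \{h_j : j \in J\}$ be two IFSs on a complete metric space $(\mathbb{X},d)$ mapping compact sets to compact sets, with $\sup_i \mathrm{Lip}(g_i,d) < 1$ and $\sup_j \mathrm{Lip}(h_j,d) < 1$, and admitting Hutchinson attractors $A_G$ and $A_H$. Let $B \subseteq \mathbb{X}$ be nonempty compact with $G(B) \subseteq B$ and $H(B) \subseteq B$, and let $\delta > 0$ be such that: for each $i \in I$ there is $j \in J$ with $d(g_i(x),h_j(x)) \le \delta$ for all $x \in B$, and for each $j \in J$ there is $i \in I$ with the same estimate. Then $h(A_G, A_H) \le \delta / (1 - \min\{\mathrm{Lip}(G,d), \mathrm{Lip}(H,d)\})$, where $h$ is the Hausdorff metric. -/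
open Filter Metric

/-- Comparison lemma for close IFSs: if two compact IFSs `G = {g i}` and `H = {h j}`
with Lipschitz constants `< 1` on a complete metric space admit Hutchinson attractors
`A_G`, `A_H`, have a common nonempty compact subinvariant set `B`, and are `δ`-close
to each other on `B` (each map of one family has a `δ`-close neighbour in the other),
then `h(A_G, A_H) ≤ δ / (1 - min(Lip G, Lip H))`. -/
theorem hausdorffDist_attractors_le_of_close
    {X : Type*} [MetricSpace X] [CompleteSpace X]
    {ι κ : Type*} [Nonempty ι] [Nonempty κ]
    (g : ι → X → X) (h : κ → X → X)
    (KG KH : NNReal) (hKG : KG < 1) (hKH : KH < 1)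
    (hg : ∀ i, LipschitzWith KG (g i)) (hh : ∀ j, LipschitzWith KH (h j))
    (TG TH : Set X → Set X)
    (hTG : ∀ S, TG S = closure (⋃ i, g i '' S))
    (hTH : ∀ S, TH S = closure (⋃ j, h j '' S))
    (hGcpt : ∀ K : Set X, IsCompact K → IsCompact (TG K))
    (hHcpt : ∀ K : Set X, IsCompact K → IsCompact (TH K))
    (AG AH : Set X)
    (hAGc : IsCompact AG) (hAGne : AG.Nonempty) (hAGinv : TG AG = AG)
    (hAHc : IsCompact AH) (hAHne : AH.Nonempty) (hAHinv : TH AH = AH)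
    (hAGattr : ∀ S : Set X, S.Nonempty → IsClosed S → Bornology.IsBounded S →
      Tendsto (fun n : ℕ => hausdorffDist (TG^[n] S) AG) atTop (nhds 0))
    (hAHattr : ∀ S : Set X, S.Nonempty → IsClosed S → Bornology.IsBounded S →
      Tendsto (fun n : ℕ => hausdorffDist (TH^[n] S) AH) atTop (nhds 0))
    (B : Set X) (hBc : IsCompact B) (hBne : B.Nonempty)
    (hGB : TG B ⊆ B) (hHB : TH B ⊆ B)
    (δ : ℝ) (hδ : 0 < δ)
    (hclose₁ : ∀ i, ∃ j, ∀ x ∈ B, dist (g i x) (h j x) ≤ δ)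
    (hclose₂ : ∀ j, ∃ i, ∀ x ∈ B, dist (g i x) (h j x) ≤ δ) :
    hausdorffDist AG AH ≤ δ / (1 - (min KG KH : ℝ)) := by

  classical
  -- notation
  set K : ℝ := (min KG KH : ℝ) with hKdef
  have hKG0 : (0:ℝ) ≤ KG := KG.coe_nonneg
  have hKH0 : (0:ℝ) ≤ KH := KH.coe_nonneg
  have hKG1 : (KG:ℝ) < 1 := by exact_mod_cast hKG
  have hKH1 : (KH:ℝ) < 1 := by exact_mod_cast hKH
  have hK0 : (0:ℝ) ≤ K := le_min hKG0 hKH0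
  have hK1 : K < 1 := lt_of_le_of_lt (min_le_left _ _) hKG1
  have h1K : (0:ℝ) < 1 - K := by linarith
  set C : ℝ := δ / (1 - K) with hCdef
  have hC0 : 0 ≤ C := le_of_lt (div_pos hδ h1K)
  -- basic properties of TG, TH
  have hTGne : ∀ S : Set X, S.Nonempty → (TG S).Nonempty := by
    intro S hS
    rw [hTG]
    obtain ⟨x, hx⟩ := hS
    obtain ⟨i⟩ := ‹Nonempty ι›
    exact ⟨g i x, subset_closure (Set.mem_iUnion.2 ⟨i, Set.mem_image_of_mem _ hx⟩)⟩
  have hTHne : ∀ S : Set X, S.Nonempty → (TH S).Nonempty := by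
    intro S hS
    rw [hTH]
    obtain ⟨x, hx⟩ := hS
    obtain ⟨j⟩ := ‹Nonempty κ›
    exact ⟨h j x, subset_closure (Set.mem_iUnion.2 ⟨j, Set.mem_image_of_mem _ hx⟩)⟩
  have hTGmono : ∀ S T : Set X, S ⊆ T → TG S ⊆ TG T := by
    intro S T hST
    rw [hTG, hTG]
    exact closure_mono (Set.iUnion_mono fun i => Set.image_mono hST)
  have hTHmono : ∀ S T : Set X, S ⊆ T → TH S ⊆ TH T := by
    intro S T hST
    rw [hTH, hTH]
    exact closure_mono (Set.iUnion_mono fun j => Set.image_mono hST)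
  have hTGsubB : ∀ S : Set X, S ⊆ B → TG S ⊆ B := fun S hS => (hTGmono S B hS).trans hGB
  have hTHsubB : ∀ S : Set X, S ⊆ B → TH S ⊆ B := fun S hS => (hTHmono S B hS).trans hHB
  -- finiteness of Hausdorff edistance for subsets of B
  have fin : ∀ S T : Set X, S.Nonempty → T.Nonempty → S ⊆ B → T ⊆ B →
      EMetric.hausdorffEdist S T ≠ ⊤ := by
    intro S T hSne hTne hSB hTB
    exact hausdorffEdist_ne_top_of_nonempty_of_bounded hSne hTne
      (hBc.isBounded.subset hSB) (hBc.isBounded.subset hTB)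
  have finAG : ∀ S : Set X, S.Nonempty → S ⊆ B → EMetric.hausdorffEdist S AG ≠ ⊤ := by
    intro S hSne hSB
    exact hausdorffEdist_ne_top_of_nonempty_of_bounded hSne hAGne
      (hBc.isBounded.subset hSB) hAGc.isBounded
  have finAH : ∀ S : Set X, S.Nonempty → S ⊆ B → EMetric.hausdorffEdist S AH ≠ ⊤ := by
    intro S hSne hSB
    exact hausdorffEdist_ne_top_of_nonempty_of_bounded hSne hAHne
      (hBc.isBounded.subset hSB) hAHc.isBounded
  -- contraction estimates
  have contrG : ∀ S T : Set X, S.Nonempty → T.Nonempty → S ⊆ B → T ⊆ B →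
      hausdorffDist (TG S) (TG T) ≤ KG * hausdorffDist S T := by
    intro S T hSne hTne hSB hTB
    have hfin := fin S T hSne hTne hSB hTB
    have key : ∀ ε : ℝ, 0 < ε →
        hausdorffDist (TG S) (TG T) ≤ KG * hausdorffDist S T + ε := by
      intro ε hε
      rw [hTG S, hTG T, hausdorffDist_closure]
      have hr : hausdorffDist S T < hausdorffDist S T + ε := by linarith
      refine le_trans (hausdorffDist_le_of_mem_dist
        (r := (KG:ℝ) * (hausdorffDist S T + ε))
        (mul_nonneg hKG0 (by linarith [hausdorffDist_nonneg (s := S) (t := T)])) ?_ ?_) ?_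
      · rintro x hx
        obtain ⟨i, s, hs, rfl⟩ := by simpa using hx
        obtain ⟨t, ht, hd⟩ := exists_dist_lt_of_hausdorffDist_lt hs hr hfin
        refine ⟨g i t, Set.mem_iUnion.2 ⟨i, Set.mem_image_of_mem _ ht⟩, ?_⟩
        calc dist (g i s) (g i t) ≤ KG * dist s t := (hg i).dist_le_mul s t
          _ ≤ KG * (hausdorffDist S T + ε) := by
              exact mul_le_mul_of_nonneg_left hd.le hKG0
      · rintro x hx
        obtain ⟨i, t, ht, rfl⟩ := by simpa using hx
        obtain ⟨s, hs, hd⟩ := exists_dist_lt_of_hausdorffDist_lt' ht hr hfin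
        refine ⟨g i s, Set.mem_iUnion.2 ⟨i, Set.mem_image_of_mem _ hs⟩, ?_⟩
        calc dist (g i t) (g i s) ≤ KG * dist t s := (hg i).dist_le_mul t s
          _ = KG * dist s t := by rw [dist_comm]
          _ ≤ KG * (hausdorffDist S T + ε) := by
              exact mul_le_mul_of_nonneg_left hd.le hKG0
      · have : (KG:ℝ) * ε ≤ ε := by nlinarith
        nlinarith
    by_contra hcon
    push_neg at hcon
    have hε : 0 < (hausdorffDist (TG S) (TG T) - KG * hausdorffDist S T) / 2 := by linarith
    have := key _ hε
    linarith
  have contrH : ∀ S T : Set X, S.Nonempty → T.Nonempty → S ⊆ B → T ⊆ B →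
      hausdorffDist (TH S) (TH T) ≤ KH * hausdorffDist S T := by
    intro S T hSne hTne hSB hTB
    have hfin := fin S T hSne hTne hSB hTB
    have key : ∀ ε : ℝ, 0 < ε →
        hausdorffDist (TH S) (TH T) ≤ KH * hausdorffDist S T + ε := by
      intro ε hε
      rw [hTH S, hTH T, hausdorffDist_closure]
      have hr : hausdorffDist S T < hausdorffDist S T + ε := by linarith
      refine le_trans (hausdorffDist_le_of_mem_dist
        (r := (KH:ℝ) * (hausdorffDist S T + ε))
        (mul_nonneg hKH0 (by linarith [hausdorffDist_nonneg (s := S) (t := T)])) ?_ ?_) ?_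
      · rintro x hx
        obtain ⟨j, s, hs, rfl⟩ := by simpa using hx
        obtain ⟨t, ht, hd⟩ := exists_dist_lt_of_hausdorffDist_lt hs hr hfin
        refine ⟨h j t, Set.mem_iUnion.2 ⟨j, Set.mem_image_of_mem _ ht⟩, ?_⟩
        calc dist (h j s) (h j t) ≤ KH * dist s t := (hh j).dist_le_mul s t
          _ ≤ KH * (hausdorffDist S T + ε) := by
              exact mul_le_mul_of_nonneg_left hd.le hKH0
      · rintro x hx
        obtain ⟨j, t, ht, rfl⟩ := by simpa using hx
        obtain ⟨s, hs, hd⟩ := exists_dist_lt_of_hausdorffDist_lt' ht hr hfin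
        refine ⟨h j s, Set.mem_iUnion.2 ⟨j, Set.mem_image_of_mem _ hs⟩, ?_⟩
        calc dist (h j t) (h j s) ≤ KH * dist t s := (hh j).dist_le_mul t s
          _ = KH * dist s t := by rw [dist_comm]
          _ ≤ KH * (hausdorffDist S T + ε) := by
              exact mul_le_mul_of_nonneg_left hd.le hKH0
      · have : (KH:ℝ) * ε ≤ ε := by nlinarith
        nlinarith
    by_contra hcon
    push_neg at hcon
    have hε : 0 < (hausdorffDist (TH S) (TH T) - KH * hausdorffDist S T) / 2 := by linarith
    have := key _ hε
    linarith
  -- closeness estimate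
  have close : ∀ S : Set X, S ⊆ B → hausdorffDist (TG S) (TH S) ≤ δ := by
    intro S hSB
    rw [hTG S, hTH S, hausdorffDist_closure]
    refine hausdorffDist_le_of_mem_dist hδ.le ?_ ?_
    · rintro x hx
      obtain ⟨i, s, hs, rfl⟩ := by simpa using hx
      obtain ⟨j, hj⟩ := hclose₁ i
      exact ⟨h j s, Set.mem_iUnion.2 ⟨j, Set.mem_image_of_mem _ hs⟩, hj s (hSB hs)⟩
    · rintro x hx
      obtain ⟨j, s, hs, rfl⟩ := by simpa using hx
      obtain ⟨i, hi⟩ := hclose₂ j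
      exact ⟨g i s, Set.mem_iUnion.2 ⟨i, Set.mem_image_of_mem _ hs⟩,
        (dist_comm (g i s) (h j s) ▸ hi s (hSB hs))⟩
  -- iterates of B
  have GnB : ∀ n : ℕ, TG^[n] B ⊆ B ∧ (TG^[n] B).Nonempty := by
    intro n
    induction n with
    | zero => exact ⟨subset_rfl, hBne⟩
    | succ n ih =>
      rw [Function.iterate_succ_apply']
      exact ⟨hTGsubB _ ih.1, hTGne _ ih.2⟩
  have HnB : ∀ n : ℕ, TH^[n] B ⊆ B ∧ (TH^[n] B).Nonempty := by
    intro n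
    induction n with
    | zero => exact ⟨subset_rfl, hBne⟩
    | succ n ih =>
      rw [Function.iterate_succ_apply']
      exact ⟨hTHsubB _ ih.1, hTHne _ ih.2⟩
  -- main induction
  have main : ∀ n : ℕ, hausdorffDist (TG^[n] B) (TH^[n] B) ≤ C := by
    intro n
    induction n with
    | zero =>
      simp only [Function.iterate_zero_apply]
      simpa [hausdorffDist_self_zero] using hC0
    | succ n ih =>
      set S := TG^[n] B
      set T := TH^[n] B
      obtain ⟨hSB, hSne⟩ := GnB n
      obtain ⟨hTB, hTne⟩ := HnB n
      rw [Function.iterate_succ_apply', Function.iterate_succ_apply']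
      have bd1 : hausdorffDist (TG S) (TH T) ≤ (KG:ℝ) * hausdorffDist S T + δ := by
        calc hausdorffDist (TG S) (TH T)
            ≤ hausdorffDist (TG S) (TG T) + hausdorffDist (TG T) (TH T) :=
              hausdorffDist_triangle (fin _ _ (hTGne S hSne) (hTGne T hTne)
                (hTGsubB _ hSB) (hTGsubB _ hTB))
          _ ≤ KG * hausdorffDist S T + δ :=
              add_le_add (contrG S T hSne hTne hSB hTB) (close T hTB)
      have bd2 : hausdorffDist (TG S) (TH T) ≤ (KH:ℝ) * hausdorffDist S T + δ := by
        calc hausdorffDist (TG S) (TH T)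
            ≤ hausdorffDist (TG S) (TH S) + hausdorffDist (TH S) (TH T) :=
              hausdorffDist_triangle (fin _ _ (hTGne S hSne) (hTHne S hSne)
                (hTGsubB _ hSB) (hTHsubB _ hSB))
          _ ≤ δ + KH * hausdorffDist S T :=
              add_le_add (close S hSB) (contrH S T hSne hTne hSB hTB)
          _ = KH * hausdorffDist S T + δ := by ring
      have hDnn : 0 ≤ hausdorffDist S T := hausdorffDist_nonneg
      have hCid : K * C + δ = C := by
        rw [hCdef]; field_simp; ring
      rcases le_total (KG:ℝ) (KH:ℝ) with hle | hle
      · have hKeq : K = (KG:ℝ) := by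
          rw [hKdef]; exact_mod_cast min_eq_left (by exact_mod_cast hle)
        calc hausdorffDist (TG S) (TH T) ≤ (KG:ℝ) * hausdorffDist S T + δ := bd1
          _ ≤ (KG:ℝ) * C + δ := by nlinarith
          _ = C := by rw [← hKeq]; exact hCid
      · have hKeq : K = (KH:ℝ) := by
          rw [hKdef]; exact_mod_cast min_eq_right (by exact_mod_cast hle)
        calc hausdorffDist (TG S) (TH T) ≤ (KH:ℝ) * hausdorffDist S T + δ := bd2
          _ ≤ (KH:ℝ) * C + δ := by nlinarith
          _ = C := by rw [← hKeq]; exact hCid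
  -- pass to the limit
  have limG := hAGattr B hBne hBc.isClosed hBc.isBounded
  have limH := hAHattr B hBne hBc.isClosed hBc.isBounded
  have hbound : ∀ n : ℕ, hausdorffDist AG AH ≤
      hausdorffDist (TG^[n] B) AG + C + hausdorffDist (TH^[n] B) AH := by
    intro n
    obtain ⟨hSB, hSne⟩ := GnB n
    obtain ⟨hTB, hTne⟩ := HnB n
    have t1 : hausdorffDist AG AH ≤
        hausdorffDist AG (TG^[n] B) + hausdorffDist (TG^[n] B) AH := by
      refine hausdorffDist_triangle ?_
      rw [EMetric.hausdorffEdist_comm]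
      exact finAG _ hSne hSB
    have t2 : hausdorffDist (TG^[n] B) AH ≤
        hausdorffDist (TG^[n] B) (TH^[n] B) + hausdorffDist (TH^[n] B) AH :=
      hausdorffDist_triangle (fin _ _ hSne hTne hSB hTB)
    have := main n
    rw [hausdorffDist_comm (s := AG) (t := TG^[n] B)] at t1
    linarith
  have hlim : Tendsto (fun n : ℕ => hausdorffDist (TG^[n] B) AG + C
      + hausdorffDist (TH^[n] B) AH) atTop (nhds (0 + C + 0)) :=
    (limG.add tendsto_const_nhds).add limH
  have := ge_of_tendsto' hlim hbound
  simpa using this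
end

section
/- Under the hypotheses of the comparison lemma for close IFSs (IFSs $G$, $H$ with Lipschitz constants $<1$, a common compact subinvariant set $B$, and $\delta$-closeness of the maps on $B$), for every $n \in \mathbb{N}$ the Hutchinson iterates satisfy $h(G^{(n)}(B), H^{(n)}(B)) \le \delta \sum_{k=0}^{n-1} \alpha^k$, where $\alpha = \min\{\mathrm{Lip}(G,d), \mathrm{Lip}(H,d)\}$ and $h$ is the Hausdorff metric. -/
open Metric EMetric Set
open scoped ENNReal NNReal

private lemma aux_lip_hd {X : Type*} [MetricSpace X] {ι : Type*} (g : ι → X → X)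
    (K : NNReal) (hg : ∀ i, LipschitzWith K (g i))
    {D E : Set X} (hDc : IsCompact D) (hDne : D.Nonempty)
    (hEc : IsCompact E) (hEne : E.Nonempty) :
    hausdorffEdist (closure (⋃ i, g i '' D)) (closure (⋃ i, g i '' E))
      ≤ (K : ℝ≥0∞) * hausdorffEdist D E := by
  rw [hausdorffEdist, hausdorffEdist_closure]
  apply hausdorffEdist_le_of_infEdist
  · rintro x hx
    simp only [Set.mem_iUnion, Set.mem_image] at hx
    obtain ⟨i, d, hdD, rfl⟩ := hx
    obtain ⟨e, heE, hee⟩ := hEc.exists_infEdist_eq_edist hEne d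
    calc infEdist (g i d) (⋃ i, g i '' E) ≤ edist (g i d) (g i e) :=
          infEdist_le_edist_of_mem (Set.mem_iUnion.2 ⟨i, Set.mem_image_of_mem _ heE⟩)
      _ ≤ K * edist d e := hg i d e
      _ = K * infEdist d E := by rw [infEdist, hee]
      _ ≤ K * hausdorffEdist D E :=
          mul_le_mul_right (infEdist_le_hausdorffEdist_of_mem hdD) _
  · rintro x hx
    simp only [Set.mem_iUnion, Set.mem_image] at hx
    obtain ⟨i, e, heE, rfl⟩ := hx
    obtain ⟨d, hdD, hdd⟩ := hDc.exists_infEdist_eq_edist hDne e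
    calc infEdist (g i e) (⋃ i, g i '' D) ≤ edist (g i e) (g i d) :=
          infEdist_le_edist_of_mem (Set.mem_iUnion.2 ⟨i, Set.mem_image_of_mem _ hdD⟩)
      _ ≤ K * edist e d := hg i e d
      _ = K * infEdist e D := by rw [infEdist, hdd]
      _ ≤ K * hausdorffEdist D E := by
          rw [hausdorffEdist, hausdorffEdist_comm]
          exact mul_le_mul_right (infEdist_le_hausdorffEdist_of_mem heE) _

private lemma aux_close_hd {X : Type*} [MetricSpace X] {ι κ : Type*}
    (g : ι → X → X) (h : κ → X → X) {B D : Set X} (hD : D ⊆ B) {δ : ℝ}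
    (hclose₁ : ∀ i, ∃ j, ∀ x ∈ B, dist (g i x) (h j x) ≤ δ)
    (hclose₂ : ∀ j, ∃ i, ∀ x ∈ B, dist (g i x) (h j x) ≤ δ) :
    hausdorffEdist (closure (⋃ i, g i '' D)) (closure (⋃ j, h j '' D))
      ≤ ENNReal.ofReal δ := by
  rw [hausdorffEdist, hausdorffEdist_closure]
  apply hausdorffEdist_le_of_mem_edist
  · rintro x hx
    simp only [Set.mem_iUnion, Set.mem_image] at hx
    obtain ⟨i, d, hdD, rfl⟩ := hx
    obtain ⟨j, hj⟩ := hclose₁ i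
    exact ⟨h j d, Set.mem_iUnion.2 ⟨j, Set.mem_image_of_mem _ hdD⟩, by
      rw [edist_dist]; exact ENNReal.ofReal_le_ofReal (hj d (hD hdD))⟩
  · rintro x hx
    simp only [Set.mem_iUnion, Set.mem_image] at hx
    obtain ⟨j, d, hdD, rfl⟩ := hx
    obtain ⟨i, hi⟩ := hclose₂ j
    exact ⟨g i d, Set.mem_iUnion.2 ⟨i, Set.mem_image_of_mem _ hdD⟩, by
      rw [edist_dist, dist_comm]; exact ENNReal.ofReal_le_ofReal (hi d (hD hdD))⟩

/-- Under the hypotheses of the comparison lemma for close IFSs (families `g`, `h` with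
Lipschitz constants `< 1`, a common compact subinvariant set `B`, and `δ`-closeness of
the maps on `B`), the Hutchinson iterates satisfy
`h(G^[n](B), H^[n](B)) ≤ δ * ∑_{k < n} α ^ k` where `α = min(Lip G, Lip H)`. -/
theorem hausdorffDist_iterates_le_of_close
    {X : Type*} [MetricSpace X] [CompleteSpace X]
    {ι κ : Type*} [Nonempty ι] [Nonempty κ]
    (g : ι → X → X) (h : κ → X → X)
    (KG KH : NNReal) (hKG : KG < 1) (hKH : KH < 1)
    (hg : ∀ i, LipschitzWith KG (g i)) (hh : ∀ j, LipschitzWith KH (h j))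
    (TG TH : Set X → Set X)
    (hTG : ∀ S, TG S = closure (⋃ i, g i '' S))
    (hTH : ∀ S, TH S = closure (⋃ j, h j '' S))
    (hGcpt : ∀ K : Set X, IsCompact K → IsCompact (TG K))
    (hHcpt : ∀ K : Set X, IsCompact K → IsCompact (TH K))
    (B : Set X) (hBc : IsCompact B) (hBne : B.Nonempty)
    (hGB : TG B ⊆ B) (hHB : TH B ⊆ B)
    (δ : ℝ) (hδ : 0 < δ)
    (hclose₁ : ∀ i, ∃ j, ∀ x ∈ B, dist (g i x) (h j x) ≤ δ)
    (hclose₂ : ∀ j, ∃ i, ∀ x ∈ B, dist (g i x) (h j x) ≤ δ) :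
    ∀ n : ℕ, hausdorffDist (TG^[n] B) (TH^[n] B)
      ≤ δ * ∑ k ∈ Finset.range n, ((min KG KH : ℝ)) ^ k := by
  have hTGmono : ∀ {S T : Set X}, S ⊆ T → TG S ⊆ TG T := by
    intro S T hST
    rw [hTG, hTG]
    exact closure_mono (Set.iUnion_mono fun i => Set.image_mono hST)
  have hTHmono : ∀ {S T : Set X}, S ⊆ T → TH S ⊆ TH T := by
    intro S T hST
    rw [hTH, hTH]
    exact closure_mono (Set.iUnion_mono fun j => Set.image_mono hST)
  have hTGne : ∀ {S : Set X}, S.Nonempty → (TG S).Nonempty := by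
    intro S ⟨x, hx⟩
    exact ⟨g (Classical.arbitrary ι) x, (hTG S) ▸ subset_closure
      (Set.mem_iUnion.2 ⟨_, Set.mem_image_of_mem _ hx⟩)⟩
  have hTHne : ∀ {S : Set X}, S.Nonempty → (TH S).Nonempty := by
    intro S ⟨x, hx⟩
    exact ⟨h (Classical.arbitrary κ) x, (hTH S) ▸ subset_closure
      (Set.mem_iUnion.2 ⟨_, Set.mem_image_of_mem _ hx⟩)⟩
  have hGsub : ∀ n, TG^[n] B ⊆ B := by
    intro n; induction n with
    | zero => simp
    | succ n ih =>
      rw [Function.iterate_succ_apply']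
      exact (hTGmono ih).trans hGB
  have hHsub : ∀ n, TH^[n] B ⊆ B := by
    intro n; induction n with
    | zero => simp
    | succ n ih =>
      rw [Function.iterate_succ_apply']
      exact (hTHmono ih).trans hHB
  have hGc : ∀ n, IsCompact (TG^[n] B) := by
    intro n; induction n with
    | zero => simpa using hBc
    | succ n ih => rw [Function.iterate_succ_apply']; exact hGcpt _ ih
  have hHc : ∀ n, IsCompact (TH^[n] B) := by
    intro n; induction n with
    | zero => simpa using hBc
    | succ n ih => rw [Function.iterate_succ_apply']; exact hHcpt _ ih
  have hGne : ∀ n, (TG^[n] B).Nonempty := by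
    intro n; induction n with
    | zero => simpa using hBne
    | succ n ih => rw [Function.iterate_succ_apply']; exact hTGne ih
  have hHne : ∀ n, (TH^[n] B).Nonempty := by
    intro n; induction n with
    | zero => simpa using hBne
    | succ n ih => rw [Function.iterate_succ_apply']; exact hTHne ih
  have hαnn : (0:ℝ) ≤ (min KG KH : ℝ) := (min KG KH).coe_nonneg
  have hsumnn : ∀ n, (0:ℝ) ≤ δ * ∑ k ∈ Finset.range n, ((min KG KH : ℝ)) ^ k := by
    intro n
    exact mul_nonneg hδ.le (Finset.sum_nonneg fun k _ => pow_nonneg hαnn k)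
  have key : ∀ n, hausdorffEdist (TG^[n] B) (TH^[n] B)
      ≤ ENNReal.ofReal (δ * ∑ k ∈ Finset.range n, ((min KG KH : ℝ)) ^ k) := by
    intro n; induction n with
    | zero => simp [hausdorffEdist, hausdorffEdist_self]
    | succ n ih =>
      rw [Function.iterate_succ_apply', Function.iterate_succ_apply']
      set D := TG^[n] B with hD
      set E := TH^[n] B with hE
      have h1 : hausdorffEdist (TG D) (TG E) ≤ (KG : ℝ≥0∞) * hausdorffEdist D E := by
        rw [hTG D, hTG E]
        exact aux_lip_hd g KG hg (hGc n) (hGne n) (hHc n) (hHne n)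
      have h2 : hausdorffEdist (TG E) (TH E) ≤ ENNReal.ofReal δ := by
        rw [hTG E, hTH E]
        exact aux_close_hd g h (hHsub n) hclose₁ hclose₂
      have h3 : hausdorffEdist (TG D) (TH D) ≤ ENNReal.ofReal δ := by
        rw [hTG D, hTH D]
        exact aux_close_hd g h (hGsub n) hclose₁ hclose₂
      have h4 : hausdorffEdist (TH D) (TH E) ≤ (KH : ℝ≥0∞) * hausdorffEdist D E := by
        rw [hTH D, hTH E]
        exact aux_lip_hd h KH hh (hGc n) (hGne n) (hHc n) (hHne n)
      have hmin : hausdorffEdist (TG D) (TH E)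
          ≤ ((min KG KH : NNReal) : ℝ≥0∞) * hausdorffEdist D E + ENNReal.ofReal δ := by
        rcases le_total KG KH with hle | hle
        · rw [min_eq_left hle]
          calc hausdorffEdist (TG D) (TH E)
              ≤ hausdorffEdist (TG D) (TG E) + hausdorffEdist (TG E) (TH E) :=
                hausdorffEdist_triangle
            _ ≤ (KG : ℝ≥0∞) * hausdorffEdist D E + ENNReal.ofReal δ := add_le_add h1 h2
        · rw [min_eq_right hle]
          calc hausdorffEdist (TG D) (TH E)
              ≤ hausdorffEdist (TG D) (TH D) + hausdorffEdist (TH D) (TH E) :=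
                hausdorffEdist_triangle
            _ ≤ ENNReal.ofReal δ + (KH : ℝ≥0∞) * hausdorffEdist D E := add_le_add h3 h4
            _ = (KH : ℝ≥0∞) * hausdorffEdist D E + ENNReal.ofReal δ := add_comm _ _
      refine hmin.trans ?_
      have hrw : δ * ∑ k ∈ Finset.range (n+1), ((min KG KH : ℝ)) ^ k
          = (min KG KH : ℝ) * (δ * ∑ k ∈ Finset.range n, ((min KG KH : ℝ)) ^ k) + δ := by
        rw [geom_sum_succ]; ring
      rw [hrw, ENNReal.ofReal_add (mul_nonneg hαnn (hsumnn n)) hδ.le,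
        ENNReal.ofReal_mul hαnn, ← NNReal.coe_min KG KH, ENNReal.ofReal_coe_nnreal]
      exact add_le_add (mul_le_mul_right ih _) le_rfl
  intro n
  rw [hausdorffDist]
  exact ENNReal.toReal_le_of_le_ofReal (hsumnn n) (key n)
end

section
/- Let $\mathbb{X}$ be a real Banach space, $g$ a surjective isometry with periodic linear part $\hat{g}$ of period $p$, $x_* = g^{-1}(0)$, and $g_t(x) = t\,g(x) + x_*$ for $t \in [0,1]$. Then the monoid generated by $G = \{g_t : t \in [0,1]\}$ under composition equals $\{\mathrm{id}\} \cup \{g_t^{(i)} : i = 1,\dots,p,\ t \in [0,1]\}$, and this monoid maps every nonempty compact set to a compact set (i.e., it is a compact IFS). -/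
/-- If `g` is a surjective isometry of a real Banach space whose linear part `ghat` is
periodic with (minimal) period `p`, `x⋆ = g⁻¹ 0` and `g_t x = t • g x + x⋆`, then the
monoid generated under composition by `G = {g_t : t ∈ [0,1]}` equals
`{id} ∪ {g_t^[i] : 1 ≤ i ≤ p, t ∈ [0,1]}`, and this monoid is a compact IFS: the
closure of the union of the images of any nonempty compact set under its maps is
compact. -/
theorem monoid_of_scaled_periodic_isometry_compact
    {X : Type*} [NormedAddCommGroup X] [NormedSpace ℝ X] [CompleteSpace X]
    (g : X → X) (hiso : Isometry g) (hsurj : Function.Surjective g)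
    (ghat : X →ₗ[ℝ] X) (xs : X) (hxs : g xs = 0) (hrep : ∀ x, g x = ghat (x - xs))
    (gt : ℝ → X → X) (hgt : ∀ t x, gt t x = t • g x + xs)
    (p : ℕ) (hp : 0 < p) (hper : (⇑ghat)^[p] = id)
    (hpmin : ∀ q : ℕ, 0 < q → (⇑ghat)^[q] = id → p ≤ q)
    (M : Set (X → X))
    (hM : M = {F | ∃ l : List ℝ, (∀ s ∈ l, s ∈ Set.Icc (0 : ℝ) 1) ∧
      F = l.foldr (fun s acc => gt s ∘ acc) id}) :
    M = {id} ∪ {F | ∃ i : ℕ, 1 ≤ i ∧ i ≤ p ∧ ∃ s ∈ Set.Icc (0 : ℝ) 1, F = (gt s)^[i]} ∧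
    ∀ K : Set X, K.Nonempty → IsCompact K →
      IsCompact (closure (⋃ F ∈ M, F '' K)) := by
  subst hM
  have hgc : Continuous g := hiso.continuous
  have hghatc : Continuous (⇑ghat) := by
    have h : (⇑ghat) = fun y => g (y + xs) := by
      funext y; rw [hrep]; simp
    rw [h]
    exact hgc.comp (continuous_id.add continuous_const)
  -- composition formula
  have key : ∀ (l : List ℝ) (x : X),
      l.foldr (fun s acc => gt s ∘ acc) id x
        = l.prod • (⇑ghat)^[l.length] (x - xs) + xs := by
    intro l
    induction l with
    | nil => intro x; simp
    | cons a l ih =>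
      intro x
      simp only [List.foldr_cons, Function.comp_apply, List.prod_cons, List.length_cons]
      rw [hgt, hrep, ih x, add_sub_cancel_right, map_smul,
        Function.iterate_succ_apply' (⇑ghat) l.length, smul_smul]
  -- iterate formula
  have hiter : ∀ (s : ℝ) (i : ℕ) (x : X),
      (gt s)^[i] x = s ^ i • (⇑ghat)^[i] (x - xs) + xs := by
    intro s i
    induction i with
    | zero => intro x; simp
    | succ i ih =>
      intro x
      rw [Function.iterate_succ_apply', ih x, hgt, hrep, add_sub_cancel_right, map_smul,
        Function.iterate_succ_apply' (⇑ghat) i, smul_smul, ← pow_succ']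
  -- periodicity
  have hper' : ∀ m : ℕ, (⇑ghat)^[p * m] = id := by
    intro m
    rw [Function.iterate_mul, hper, Function.iterate_id]
  have hperiod : ∀ n : ℕ, 1 ≤ n → (⇑ghat)^[n] = (⇑ghat)^[(n - 1) % p + 1] := by
    intro n hn
    have hd : n = (n - 1) % p + 1 + p * ((n - 1) / p) := by
      have := Nat.mod_add_div (n - 1) p
      omega
    conv_lhs => rw [hd]
    rw [Function.iterate_add, hper']
    simp
  -- products of [0,1] elements lie in [0,1]
  have hprod : ∀ l : List ℝ, (∀ s ∈ l, s ∈ Set.Icc (0 : ℝ) 1) → l.prod ∈ Set.Icc (0 : ℝ) 1 := by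
    intro l
    induction l with
    | nil => simp
    | cons a l ih =>
      intro h
      have ha := h a List.mem_cons_self
      have hl := ih (fun s hs => h s (List.mem_cons_of_mem a hs))
      simp only [List.prod_cons, Set.mem_Icc] at *
      constructor
      · exact mul_nonneg ha.1 hl.1
      · nlinarith [ha.1, ha.2, hl.1, hl.2]
  -- the set equality
  have hset : {F | ∃ l : List ℝ, (∀ s ∈ l, s ∈ Set.Icc (0 : ℝ) 1) ∧
        F = l.foldr (fun s acc => gt s ∘ acc) id}
      = {id} ∪ {F | ∃ i : ℕ, 1 ≤ i ∧ i ≤ p ∧ ∃ s ∈ Set.Icc (0 : ℝ) 1, F = (gt s)^[i]} := by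
    ext F
    simp only [Set.mem_union, Set.mem_singleton_iff, Set.mem_setOf_eq]
    constructor
    · rintro ⟨l, hl, rfl⟩
      rcases eq_or_ne l [] with rfl | hne
      · left; simp
      · right
        have hn : 1 ≤ l.length := List.length_pos_iff.mpr hne
        set n := l.length with hnn
        set i := (n - 1) % p + 1 with hi
        have hi1 : 1 ≤ i := Nat.le_add_left 1 _
        have hip : i ≤ p := by
          have := Nat.mod_lt (n - 1) hp
          omega
        have hu := hprod l hl
        rw [Set.mem_Icc] at hu
        set s : ℝ := l.prod ^ ((1 : ℝ) / i) with hs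
        have hsIcc : s ∈ Set.Icc (0 : ℝ) 1 := by
          constructor
          · exact Real.rpow_nonneg hu.1 _
          · exact Real.rpow_le_one hu.1 hu.2 (by positivity)
        have hspow : s ^ i = l.prod := by
          rw [hs, ← Real.rpow_natCast (l.prod ^ ((1 : ℝ) / i)) i, ← Real.rpow_mul hu.1]
          rw [one_div, inv_mul_cancel₀ (Nat.cast_ne_zero.mpr (by omega : i ≠ 0)), Real.rpow_one]
        refine ⟨i, hi1, hip, s, hsIcc, ?_⟩
        funext x
        rw [key l x, hiter s i x, hspow, hperiod n hn]
    · rintro (rfl | ⟨i, hi1, hip, s, hsIcc, rfl⟩)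
      · exact ⟨[], by simp, by simp⟩
      · refine ⟨List.replicate i s, ?_, ?_⟩
        · intro t ht
          rw [List.eq_of_mem_replicate ht]
          exact hsIcc
        · funext x
          rw [key, hiter, List.prod_replicate, List.length_replicate]
  refine ⟨hset, ?_⟩
  intro K hKne hKc
  have hS : (⋃ F ∈ {F | ∃ l : List ℝ, (∀ s ∈ l, s ∈ Set.Icc (0 : ℝ) 1) ∧
        F = l.foldr (fun s acc => gt s ∘ acc) id}, F '' K)
      = K ∪ ⋃ i ∈ Set.Icc 1 p,
          (fun q : ℝ × X => (gt q.1)^[i] q.2) '' (Set.Icc (0 : ℝ) 1 ×ˢ K) := by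
    rw [hset]
    ext y
    simp only [Set.mem_iUnion, Set.mem_union, Set.mem_singleton_iff, Set.mem_image,
      Set.mem_setOf_eq, Set.mem_prod, Set.mem_Icc, Prod.exists, exists_prop]
    constructor
    · rintro ⟨F, (rfl | ⟨i, hi1, hip, s, hsIcc, rfl⟩), x, hx, rfl⟩
      · left; exact hx
      · right
        exact ⟨i, ⟨hi1, hip⟩, s, x, ⟨⟨hsIcc.1, hsIcc.2⟩, hx⟩, rfl⟩
    · rintro (hy | ⟨i, ⟨hi1, hip⟩, s, x, ⟨hs, hx⟩, rfl⟩)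
      · exact ⟨id, Or.inl rfl, y, hy, rfl⟩
      · exact ⟨(gt s)^[i], Or.inr ⟨i, hi1, hip, s, hs, rfl⟩, x, hx, rfl⟩
  rw [hS]
  have h1 : IsCompact (K ∪ ⋃ i ∈ Set.Icc 1 p,
      (fun q : ℝ × X => (gt q.1)^[i] q.2) '' (Set.Icc (0 : ℝ) 1 ×ˢ K)) := by
    apply hKc.union
    apply Set.Finite.isCompact_biUnion (Set.finite_Icc 1 p)
    intro i _
    apply IsCompact.image (isCompact_Icc.prod hKc)
    have h : (fun q : ℝ × X => (gt q.1)^[i] q.2)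
        = fun q : ℝ × X => q.1 ^ i • (⇑ghat)^[i] (q.2 - xs) + xs := by
      funext q; exact hiter q.1 i q.2
    rw [h]
    exact ((continuous_fst.pow i).smul
      ((hghatc.iterate i).comp (continuous_snd.sub continuous_const))).add continuous_const
  rw [h1.isClosed.closure_eq]
  exact h1
end

section
/- Let $F_t$, $t \in [0,1]$, be a one-parameter family of IFSs $F_t = \{f_{(1,t)},\dots,f_{(N,t)}\}$ on a complete metric space, satisfying: (H1) $t \mapsto f_{(i,t)}(x)$ is continuous for each $i,x$; (H2) $\mathrm{Lip}(F_t,d) < 1$ for $t < 1$. If $A^{\bullet}$ is a compact set such that $A_{t_n} \to A^{\bullet}$ in the Hausdorff metric for some sequence $t_n \uparrow 1$ (where $A_{t_n}$ is the attractor of $F_{t_n}$), then $F_1(A^{\bullet}) = A^{\bullet}$. -/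
open Filter Metric

/-- For a one-parameter family of IFSs `F_t = {f_{(i,t)} : i < N}` on a complete metric
space satisfying (H1) (continuity of `t ↦ f_{(i,t)} x`) and (H2) (`Lip(F_t) < 1` for
`t < 1`), with attractors `A_t` for `t < 1`: if `A_{t_n} → A•` in the Hausdorff metric
along some increasing sequence `t_n ↑ 1`, then `A•` is invariant for `F_1`. -/
theorem upper_transition_attractor_invariant
    {X : Type*} [MetricSpace X] [CompleteSpace X]
    {N : ℕ} (hN : 0 < N) (f : Fin N → ℝ → X → X)
    (H1 : ∀ i x, ContinuousOn (fun t => f i t x) (Set.Icc (0 : ℝ) 1))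
    (H2 : ∀ t ∈ Set.Ico (0 : ℝ) 1, ∃ K : NNReal, K < 1 ∧ ∀ i, LipschitzWith K (f i t))
    (T : ℝ → Set X → Set X) (hT : ∀ t S, T t S = ⋃ i, f i t '' S)
    (A : ℝ → Set X)
    (hA : ∀ t ∈ Set.Ico (0 : ℝ) 1, IsCompact (A t) ∧ (A t).Nonempty ∧ T t (A t) = A t ∧
      ∀ K : Set X, K.Nonempty → IsCompact K →
        Tendsto (fun n : ℕ => hausdorffDist ((T t)^[n] K) (A t)) atTop (nhds 0))
    (tn : ℕ → ℝ) (htn : ∀ n, tn n ∈ Set.Ico (0 : ℝ) 1)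
    (hmono : Monotone tn) (hlim : Tendsto tn atTop (nhds 1))
    (Ab : Set X) (hAbc : IsCompact Ab) (hAbne : Ab.Nonempty)
    (hconv : Tendsto (fun n => hausdorffDist (A (tn n)) Ab) atTop (nhds 0)) :
    T 1 Ab = Ab := by
  have hIcc : ∀ n, tn n ∈ Set.Icc (0 : ℝ) 1 := fun n => Set.Ico_subset_Icc_self (htn n)
  -- pointwise convergence f i (tn n) x → f i 1 x
  have htends : ∀ i x, Tendsto (fun n => f i (tn n) x) atTop (nhds (f i 1 x)) := by
    intro i x
    have h1icc : (1 : ℝ) ∈ Set.Icc (0 : ℝ) 1 := by norm_num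
    refine (H1 i x 1 h1icc).tendsto.comp ?_
    rw [tendsto_nhdsWithin_iff]
    exact ⟨hlim, Eventually.of_forall hIcc⟩
  -- nonexpansiveness for t < 1
  have hnonexp : ∀ i, ∀ t ∈ Set.Ico (0 : ℝ) 1, ∀ x y,
      dist (f i t x) (f i t y) ≤ dist x y := by
    intro i t ht x y
    obtain ⟨K, hK1, hK⟩ := H2 t ht
    calc dist (f i t x) (f i t y) ≤ K * dist x y := (hK i).dist_le_mul x y
      _ ≤ 1 * dist x y := by
          gcongr
          exact_mod_cast hK1.le
      _ = dist x y := one_mul _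
  -- f i 1 is 1-Lipschitz
  have hlip1 : ∀ i, LipschitzWith 1 (f i 1) := by
    intro i
    rw [lipschitzWith_iff_dist_le_mul]
    intro x y
    rw [NNReal.coe_one, one_mul]
    exact le_of_tendsto_of_tendsto' ((htends i x).dist (htends i y)) tendsto_const_nhds
      (fun n => hnonexp i (tn n) (htn n) x y)
  have hT1c : IsCompact (T 1 Ab) := by
    rw [hT]
    exact isCompact_iUnion fun i => hAbc.image (hlip1 i).continuous
  have hT1ne : (T 1 Ab).Nonempty := by
    rw [hT]
    obtain ⟨x, hx⟩ := hAbne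
    exact ⟨f ⟨0, hN⟩ 1 x, Set.mem_iUnion.2 ⟨⟨0, hN⟩, ⟨x, hx, rfl⟩⟩⟩
  have key : hausdorffDist (T 1 Ab) Ab = 0 := by
    have hle : ∀ ε > (0 : ℝ), hausdorffDist (T 1 Ab) Ab ≤ 3 * ε := by
      intro ε hε
      have hε3 : (0 : ℝ) < ε / 3 := by linarith
      -- finite ε/3-net of Ab
      obtain ⟨s, hsub, hfin, hcov⟩ := hAbc.finite_cover_balls hε3
      -- eventually close on net points
      have hev1 : ∀ᶠ n in atTop, ∀ x ∈ s, ∀ i,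
          dist (f i (tn n) x) (f i 1 x) < ε / 3 := by
        rw [eventually_all_finite hfin]
        intro x _
        rw [eventually_all]
        intro i
        exact (htends i x).eventually (eventually_nhds_iff_ball.2
          ⟨ε / 3, hε3, fun y hy => hy⟩)
      have hev2 : ∀ᶠ n in atTop, hausdorffDist (A (tn n)) Ab < ε := by
        have := hconv.eventually (eventually_lt_nhds hε)
        exact this
      obtain ⟨n, h1, h2⟩ := (hev1.and hev2).exists
      -- uniform closeness on Ab
      have hunif : ∀ i, ∀ x ∈ Ab, dist (f i 1 x) (f i (tn n) x) ≤ ε := by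
        intro i x hx
        obtain ⟨xj, hxj, hxd⟩ : ∃ xj ∈ s, dist x xj < ε / 3 := by
          have := hcov hx
          simp only [Set.mem_iUnion, mem_ball] at this
          obtain ⟨xj, hxj, hd⟩ := this
          exact ⟨xj, hxj, hd⟩
        calc dist (f i 1 x) (f i (tn n) x)
            ≤ dist (f i 1 x) (f i 1 xj) + dist (f i 1 xj) (f i (tn n) xj)
              + dist (f i (tn n) xj) (f i (tn n) x) := dist_triangle4 _ _ _ _
          _ ≤ dist x xj + ε / 3 + dist xj x := by
              gcongr
              · have := (hlip1 i).dist_le_mul x xj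
                simpa using this
              · rw [dist_comm]
                exact (h1 xj hxj i).le
              · exact hnonexp i (tn n) (htn n) xj x
          _ ≤ ε := by
              rw [dist_comm xj x]
              linarith
      obtain ⟨hAtc, hAtne, hAtfix, -⟩ := hA (tn n) (htn n)
      have hedAtAb : EMetric.hausdorffEdist (A (tn n)) Ab ≠ ⊤ :=
        hausdorffEdist_ne_top_of_nonempty_of_bounded hAtne hAbne hAtc.isBounded
          hAbc.isBounded
      -- hausdorffDist (T 1 Ab) (A (tn n)) ≤ 2ε
      have hd1 : hausdorffDist (T 1 Ab) (A (tn n)) ≤ 2 * ε := by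
        conv_lhs => rw [← hAtfix]
        refine hausdorffDist_le_of_mem_dist (by linarith) ?_ ?_
        · intro z hz
          rw [hT] at hz
          simp only [Set.mem_iUnion, Set.mem_image] at hz
          obtain ⟨i, x, hx, rfl⟩ := hz
          have hinf : infDist x (A (tn n)) < ε := by
            have h' : infDist x (A (tn n)) ≤ hausdorffDist Ab (A (tn n)) :=
              infDist_le_hausdorffDist_of_mem hx (by rw [Metric.hausdorffEDist_comm]; exact hedAtAb)
            rw [hausdorffDist_comm] at h'
            exact lt_of_le_of_lt h' h2
          obtain ⟨y, hy, hxy⟩ := (infDist_lt_iff hAtne).1 hinf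
          refine ⟨f i (tn n) y, ?_, ?_⟩
          · rw [hT]
            exact Set.mem_iUnion.2 ⟨i, ⟨y, hy, rfl⟩⟩
          · calc dist (f i 1 x) (f i (tn n) y)
                ≤ dist (f i 1 x) (f i (tn n) x) + dist (f i (tn n) x) (f i (tn n) y) :=
                  dist_triangle _ _ _
              _ ≤ ε + dist x y := by
                  gcongr
                  · exact hunif i x hx
                  · exact hnonexp i (tn n) (htn n) x y
              _ ≤ 2 * ε := by linarith
        · intro z hz
          rw [hT] at hz
          simp only [Set.mem_iUnion, Set.mem_image] at hz
          obtain ⟨i, y, hy, rfl⟩ := hz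
          have hinf : infDist y Ab < ε := by
            have h' : infDist y Ab ≤ hausdorffDist (A (tn n)) Ab :=
              infDist_le_hausdorffDist_of_mem hy hedAtAb
            exact lt_of_le_of_lt h' h2
          obtain ⟨x, hx, hxy⟩ := (infDist_lt_iff hAbne).1 hinf
          refine ⟨f i 1 x, ?_, ?_⟩
          · rw [hT]
            exact Set.mem_iUnion.2 ⟨i, ⟨x, hx, rfl⟩⟩
          · calc dist (f i (tn n) y) (f i 1 x)
                ≤ dist (f i (tn n) y) (f i (tn n) x) + dist (f i (tn n) x) (f i 1 x) :=
                  dist_triangle _ _ _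
              _ ≤ dist y x + ε := by
                  gcongr
                  · exact hnonexp i (tn n) (htn n) y x
                  · rw [dist_comm]
                    exact hunif i x hx
              _ ≤ 2 * ε := by linarith
      have hed1 : EMetric.hausdorffEdist (T 1 Ab) (A (tn n)) ≠ ⊤ :=
        hausdorffEdist_ne_top_of_nonempty_of_bounded hT1ne hAtne hT1c.isBounded
          hAtc.isBounded
      calc hausdorffDist (T 1 Ab) Ab
          ≤ hausdorffDist (T 1 Ab) (A (tn n)) + hausdorffDist (A (tn n)) Ab :=
            hausdorffDist_triangle hed1
        _ ≤ 2 * ε + ε := by have := h2.le; gcongr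
        _ = 3 * ε := by ring
    refine le_antisymm ?_ hausdorffDist_nonneg
    by_contra h
    push_neg at h
    have := hle (hausdorffDist (T 1 Ab) Ab / 6) (by linarith)
    linarith
  have hedfin : EMetric.hausdorffEdist (T 1 Ab) Ab ≠ ⊤ :=
    hausdorffEdist_ne_top_of_nonempty_of_bounded hT1ne hAbne hT1c.isBounded
      hAbc.isBounded
  exact (hT1c.isClosed.hausdorffDist_zero_iff_eq hAbc.isClosed hedfin).1 key
end

section
/- Let $F_t$ satisfy (H1) and (H2), and suppose $f_{(i_*,1)}$ is a surjective isometry for some index $i_*$. If $A^{\bullet}$ is an upper transition attractor of $F_t$ (a Hausdorff limit of attractors $A_{t_n}$ along $t_n \uparrow 1$), then $f_{(i_*,1)}(A^{\bullet}) = A^{\bullet}$. -/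
open Filter Metric

lemma isometry_iterate {X : Type*} [MetricSpace X] {g : X → X} (hg : Isometry g) :
    ∀ n, Isometry (g^[n]) := by
  intro n
  induction n with
  | zero => simpa using isometry_id
  | succ k ih => rw [Function.iterate_succ]; exact ih.comp hg

/-- An isometry mapping a compact set into itself maps it onto itself. -/
lemma isometry_image_eq_of_mapsTo {X : Type*} [MetricSpace X] {g : X → X}
    (hg : Isometry g) {K : Set X} (hK : IsCompact K) (hmaps : g '' K ⊆ K) :
    g '' K = K := by
  refine Set.Subset.antisymm hmaps ?_
  intro a ha
  have hmem : ∀ n, g^[n] a ∈ K := by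
    intro n
    induction n with
    | zero => simpa using ha
    | succ k ih =>
      rw [Function.iterate_succ_apply']
      exact hmaps ⟨_, ih, rfl⟩
  have hne : (g '' K).Nonempty := ⟨g a, a, ha, rfl⟩
  have hclosed : IsClosed (g '' K) := (hK.image hg.continuous).isClosed
  rw [hclosed.mem_iff_infDist_zero hne]
  have hnonneg : 0 ≤ infDist a (g '' K) := infDist_nonneg
  by_contra hne0
  have hpos : 0 < infDist a (g '' K) := lt_of_le_of_ne hnonneg (Ne.symm hne0)
  obtain ⟨x, -, φ, hφ, hconv⟩ := hK.tendsto_subseq hmem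
  have hcauchy : CauchySeq (fun k => g^[φ k] a) := hconv.cauchySeq
  rw [Metric.cauchySeq_iff] at hcauchy
  obtain ⟨M, hM⟩ := hcauchy _ hpos
  have hlt : φ M < φ (M + 1) := hφ (Nat.lt_succ_self M)
  have hd := hM (M + 1) (le_of_lt (Nat.lt_succ_self M)) M le_rfl
  -- rewrite the distance
  set j := φ (M + 1) - φ M with hj
  have hjpos : 0 < j := Nat.sub_pos_of_lt hlt
  have hrw : g^[φ (M + 1)] a = g^[φ M] (g^[j] a) := by
    rw [← Function.iterate_add_apply, hj, Nat.add_sub_cancel' (le_of_lt hlt)]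
  have hdist : dist (g^[φ (M+1)] a) (g^[φ M] a) = dist (g^[j] a) a := by
    rw [hrw]
    exact (isometry_iterate hg (φ M)).dist_eq _ _
  have hmemimg : g^[j] a ∈ g '' K := by
    obtain ⟨m, hm⟩ := Nat.exists_eq_succ_of_ne_zero hjpos.ne'
    rw [hm, Function.iterate_succ_apply']
    exact ⟨_, hmem m, rfl⟩
  have : infDist a (g '' K) ≤ dist a (g^[j] a) := infDist_le_dist_of_mem hmemimg
  rw [dist_comm a (g^[j] a), ← hdist] at this
  exact absurd (lt_of_le_of_lt this hd) (lt_irrefl _)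

/-- Under (H1) and (H2), if `f_{(i⋆,1)}` is a surjective isometry and `A•` is an upper
transition attractor of the family (a Hausdorff limit of the attractors `A_{t_n}` along
some `t_n ↑ 1`), then `A•` is `f_{(i⋆,1)}`-symmetric: `f_{(i⋆,1)}(A•) = A•`. -/
theorem upper_transition_attractor_symmetric
    {X : Type*} [MetricSpace X] [CompleteSpace X]
    {N : ℕ} (hN : 0 < N) (f : Fin N → ℝ → X → X)
    (H1 : ∀ i x, ContinuousOn (fun t => f i t x) (Set.Icc (0 : ℝ) 1))
    (H2 : ∀ t ∈ Set.Ico (0 : ℝ) 1, ∃ K : NNReal, K < 1 ∧ ∀ i, LipschitzWith K (f i t))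
    (T : ℝ → Set X → Set X) (hT : ∀ t S, T t S = ⋃ i, f i t '' S)
    (A : ℝ → Set X)
    (hA : ∀ t ∈ Set.Ico (0 : ℝ) 1, IsCompact (A t) ∧ (A t).Nonempty ∧ T t (A t) = A t ∧
      ∀ K : Set X, K.Nonempty → IsCompact K →
        Tendsto (fun n : ℕ => hausdorffDist ((T t)^[n] K) (A t)) atTop (nhds 0))
    (istar : Fin N) (hiso : Isometry (f istar 1)) (hsurj : Function.Surjective (f istar 1))
    (tn : ℕ → ℝ) (htn : ∀ n, tn n ∈ Set.Ico (0 : ℝ) 1)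
    (hmono : Monotone tn) (hlim : Tendsto tn atTop (nhds 1))
    (Ab : Set X) (hAbc : IsCompact Ab) (hAbne : Ab.Nonempty)
    (hconv : Tendsto (fun n => hausdorffDist (A (tn n)) Ab) atTop (nhds 0)) :
    f istar 1 '' Ab = Ab := by
  -- First show `f istar 1 '' Ab ⊆ Ab`.
  have key : f istar 1 '' Ab ⊆ Ab := by
    rintro y ⟨x, hx, rfl⟩
    -- facts about each attractor A (tn n)
    have hAc : ∀ n, IsCompact (A (tn n)) := fun n => (hA _ (htn n)).1
    have hAne : ∀ n, (A (tn n)).Nonempty := fun n => (hA _ (htn n)).2.1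
    have hedist : ∀ n, EMetric.hausdorffEdist (A (tn n)) Ab ≠ ⊤ := fun n =>
      hausdorffEdist_ne_top_of_nonempty_of_bounded (hAne n) hAbne
        (hAc n).isBounded hAbc.isBounded
    -- choose x_n ∈ A (tn n) near x
    have hxn : ∀ n, ∃ z ∈ A (tn n), dist x z ≤ hausdorffDist (A (tn n)) Ab := by
      intro n
      obtain ⟨z, hz, hz2⟩ := (hAc n).exists_infDist_eq_dist (hAne n) x
      refine ⟨z, hz, ?_⟩
      rw [← hz2]
      have h := infDist_le_hausdorffDist_of_mem hx
        (by rw [EMetric.hausdorffEdist_comm]; exact hedist n)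
      rwa [hausdorffDist_comm] at h
    choose xn hxn1 hxn2 using hxn
    -- f istar (tn n) xn n ∈ A (tn n)
    have hyn : ∀ n, f istar (tn n) (xn n) ∈ A (tn n) := by
      intro n
      have h3 := (hA _ (htn n)).2.2.1
      rw [← h3, hT]
      exact Set.mem_iUnion.mpr ⟨istar, ⟨xn n, hxn1 n, rfl⟩⟩
    -- distance estimate
    have hest : ∀ n, infDist (f istar 1 x) Ab ≤
        dist (f istar (tn n) x) (f istar 1 x) + 2 * hausdorffDist (A (tn n)) Ab := by
      intro n
      obtain ⟨K, hK1, hKlip⟩ := H2 _ (htn n)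
      have h1 : dist (f istar (tn n) (xn n)) (f istar 1 x) ≤
          dist x (xn n) + dist (f istar (tn n) x) (f istar 1 x) := by
        calc dist (f istar (tn n) (xn n)) (f istar 1 x)
            ≤ dist (f istar (tn n) (xn n)) (f istar (tn n) x)
              + dist (f istar (tn n) x) (f istar 1 x) := dist_triangle _ _ _
          _ ≤ dist x (xn n) + dist (f istar (tn n) x) (f istar 1 x) := by
              have := (hKlip istar).dist_le_mul (xn n) x
              have hK1' : (K : ℝ) ≤ 1 := le_of_lt hK1
              nlinarith [dist_nonneg (x := xn n) (y := x),
                dist_comm (xn n) x, dist_comm x (xn n)]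
      have h2 : infDist (f istar 1 x) Ab ≤
          dist (f istar 1 x) (f istar (tn n) (xn n)) + hausdorffDist (A (tn n)) Ab := by
        calc infDist (f istar 1 x) Ab
            ≤ dist (f istar 1 x) (f istar (tn n) (xn n)) + infDist (f istar (tn n) (xn n)) Ab := by
              have := infDist_le_infDist_add_dist (x := f istar 1 x)
                (y := f istar (tn n) (xn n)) (s := Ab)
              linarith
          _ ≤ dist (f istar 1 x) (f istar (tn n) (xn n)) + hausdorffDist (A (tn n)) Ab := by
              gcongr
              exact infDist_le_hausdorffDist_of_mem (hyn n) (hedist n)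
      rw [dist_comm (f istar 1 x)] at h2
      have := hxn2 n
      linarith [h2, h1]
    -- RHS tends to 0
    have hcont : Tendsto (fun n => dist (f istar (tn n) x) (f istar 1 x)) atTop (nhds 0) := by
      have h1mem : (1 : ℝ) ∈ Set.Icc (0 : ℝ) 1 := by norm_num
      have := (H1 istar x 1 h1mem).tendsto
      have htend : Tendsto (fun n => f istar (tn n) x) atTop (nhds (f istar 1 x)) := by
        refine this.comp (tendsto_nhdsWithin_iff.mpr ⟨hlim, ?_⟩)
        exact Eventually.of_forall fun n => ⟨(htn n).1, le_of_lt (htn n).2⟩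
      have := (tendsto_iff_dist_tendsto_zero).mp htend
      simpa using this
    have hrhs : Tendsto (fun n => dist (f istar (tn n) x) (f istar 1 x)
        + 2 * hausdorffDist (A (tn n)) Ab) atTop (nhds 0) := by
      have := hcont.add (hconv.const_mul 2)
      simpa using this
    have h0 : infDist (f istar 1 x) Ab ≤ 0 :=
      le_of_tendsto_of_tendsto' tendsto_const_nhds hrhs hest
    have : infDist (f istar 1 x) Ab = 0 := le_antisymm h0 infDist_nonneg
    exact (hAbc.isClosed.mem_iff_infDist_zero hAbne).mpr this
  exact isometry_image_eq_of_mapsTo hiso hAbc key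
end

section
/- Let $\mathbb{X} = \ell^\infty(\mathbb{C})$, $\alpha_k = \pi/(2k)$, $g((x_k)) = (x_k e^{i\alpha_k})$, and for $t \in [0,1]$ let $g_t = t\,g$ and $f_t((x_k)) = (\tfrac{t}{4}x_k + 1 - \tfrac{t}{4})$. Let $D = \{\mathbf{0}\} \cup \bigcup_{m=0}^{\infty} \overline{B}\big((\tfrac{3}{4}t^m e^{im\alpha_k})_k,\ \tfrac{1}{4}t^m\big)$. Then $f_t(D) \subseteq D$ and $g_t(D) \subseteq D$; consequently (since $D$ is closed and the maps are contractions for $t<1$) the attractor $A_t$ of $\{f_t, g_t\}$ is contained in $D$, and moreover $(t^m e^{im\alpha_k})_k = g_t^{(m)}(\mathbf{1}) \in A_t$ for every $m \in \mathbb{N}$, since $\mathbf{1}$ is the fixed point of $f_t$. -/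
open Complex

set_option maxHeartbeats 1000000
set_option synthInstance.maxHeartbeats 400000

lemma linfty_coord_sub (x y : lp (fun _ : ℕ => ℂ) ⊤) (k : ℕ) :
    (x - y) k = x k - y k := by rw [lp.coeFn_sub]; rfl

lemma linfty_coord_dist_le (x y : lp (fun _ : ℕ => ℂ) ⊤) (k : ℕ) :
    ‖x k - y k‖ ≤ dist x y := by
  rw [dist_eq_norm, ← linfty_coord_sub]
  exact lp.norm_apply_le_norm ENNReal.top_ne_zero (x - y) k

lemma linfty_dist_le_of_coord (x y : lp (fun _ : ℕ => ℂ) ⊤) {r : ℝ} (hr : 0 ≤ r)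
    (h : ∀ k, ‖x k - y k‖ ≤ r) : dist x y ≤ r := by
  rw [dist_eq_norm]
  exact lp.norm_le_of_forall_le hr (fun k => by rw [linfty_coord_sub]; exact h k)

lemma norm_exp_real_mul_I' (θ : ℝ) : ‖Complex.exp ((θ : ℂ) * Complex.I)‖ = 1 := by
  exact Complex.norm_exp_ofReal_mul_I θ

/-- The `ℓ^∞(ℂ)` example: with `α_k = π/(2k)` (coordinates indexed so that
`α k = π / (2(k+1))`), `g` rotating the `k`-th coordinate by `α_k`, `g_t = t g`,
`f_t((x_k)) = (t x_k / 4 + 1 - t/4)`, and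
`D = {0} ∪ ⋃_m closedBall((3/4) t^m e^{i m α_k}, t^m / 4)`:
one has `f_t(D) ⊆ D` and `g_t(D) ⊆ D`; consequently the attractor `A_t` of
`{f_t, g_t}` (for `t < 1`) is contained in `D`, and moreover
`g_t^[m](𝟙) ∈ A_t` for every `m`, since `𝟙` is the fixed point of `f_t`. -/
theorem linfty_example_subinvariance_and_orbit
    (α : ℕ → ℝ) (hα : ∀ k, α k = Real.pi / (2 * (k + 1)))
    (g f : ℝ → lp (fun _ : ℕ => ℂ) ⊤ → lp (fun _ : ℕ => ℂ) ⊤)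
    (hg : ∀ t x k, (g t x) k = (t : ℂ) * (x k * Complex.exp (α k * Complex.I)))
    (hf : ∀ t x k, (f t x) k = (t : ℂ) / 4 * x k + 1 - (t : ℂ) / 4)
    (one : lp (fun _ : ℕ => ℂ) ⊤) (hone : ∀ k, one k = 1)
    (t : ℝ) (ht : t ∈ Set.Ico (0 : ℝ) 1)
    (c : ℕ → lp (fun _ : ℕ => ℂ) ⊤)
    (hc : ∀ m k, (c m) k = (3 / 4 : ℂ) * (t : ℂ) ^ m * Complex.exp (m * α k * Complex.I))
    (D : Set (lp (fun _ : ℕ => ℂ) ⊤))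
    (hD : D = {0} ∪ ⋃ m : ℕ, Metric.closedBall (c m) (t ^ m / 4))
    (A : Set (lp (fun _ : ℕ => ℂ) ⊤))
    (hAc : IsCompact A) (hAne : A.Nonempty) (hAinv : f t '' A ∪ g t '' A = A) :
    f t '' D ⊆ D ∧ g t '' D ⊆ D ∧ A ⊆ D ∧ ∀ m : ℕ, (g t)^[m] one ∈ A := by
  obtain ⟨ht0, ht1⟩ := ht
  have htp : ∀ m : ℕ, (0:ℝ) ≤ t ^ m := fun m => pow_nonneg ht0 m
  have htp1 : ∀ m : ℕ, t ^ m ≤ 1 := fun m => pow_le_one₀ ht0 ht1.le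
  have hnt : ‖(t : ℂ)‖ = t := by rw [Complex.norm_real, Real.norm_eq_abs, _root_.abs_of_nonneg ht0]
  -- norm of the centers' coordinates
  have hnormc : ∀ m k, ‖(c m) k‖ = 3 / 4 * t ^ m := by
    intro m k
    rw [hc, show ((m : ℂ) * (α k) * Complex.I) = ((m * α k : ℝ) : ℂ) * Complex.I by
      push_cast; ring]
    rw [norm_mul, norm_mul, norm_exp_real_mul_I', mul_one, norm_pow, hnt]
    norm_num
  -- coordinates of points in the balls
  have hcoordS : ∀ m, ∀ x ∈ Metric.closedBall (c m) (t ^ m / 4), ∀ k, ‖x k‖ ≤ t ^ m := by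
    intro m x hx k
    have h1 : ‖x k - (c m) k‖ ≤ t ^ m / 4 :=
      (linfty_coord_dist_le x (c m) k).trans (Metric.mem_closedBall.1 hx)
    calc ‖x k‖ = ‖(x k - (c m) k) + (c m) k‖ := by ring_nf
      _ ≤ ‖x k - (c m) k‖ + ‖(c m) k‖ := norm_add_le _ _
      _ ≤ t ^ m / 4 + 3 / 4 * t ^ m := add_le_add h1 (le_of_eq (hnormc m k))
      _ = t ^ m := by ring
  -- norms of points in the balls
  have hnormS : ∀ m, ∀ x ∈ Metric.closedBall (c m) (t ^ m / 4), ‖x‖ ≤ t ^ m := by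
    intro m x hx
    have := linfty_dist_le_of_coord x 0 (htp m) (fun k => by
      rw [show (0 : lp (fun _ : ℕ => ℂ) ⊤) k = 0 from rfl, sub_zero]
      exact hcoordS m x hx k)
    simpa [dist_zero_right] using this
  -- coordinates of points of D are bounded by 1
  have hcoordD : ∀ x ∈ D, ∀ k, ‖x k‖ ≤ 1 := by
    intro x hx k
    rw [hD] at hx
    rcases hx with h0 | hm
    · rw [Set.mem_singleton_iff.1 h0]
      rw [show (0 : lp (fun _ : ℕ => ℂ) ⊤) k = 0 from rfl]
      simp
    · obtain ⟨_, ⟨m, rfl⟩, hm⟩ := hm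
      exact (hcoordS m x hm k).trans (htp1 m)
  -- f maps D into D
  have hfD : f t '' D ⊆ D := by
    rintro _ ⟨x, hx, rfl⟩
    have hxk := hcoordD x hx
    rw [hD]; right
    refine Set.mem_iUnion.2 ⟨0, Metric.mem_closedBall.2
      (linfty_dist_le_of_coord _ _ (by norm_num) fun k => ?_)⟩
    have hcalc : (f t x) k - (c 0) k = (t : ℂ)/4 * x k + (((1 - t)/4 : ℝ) : ℂ) := by
      rw [hf, hc]
      push_cast
      rw [show ((0:ℂ) * (α k) * Complex.I) = 0 by ring, Complex.exp_zero]
      ring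
    rw [hcalc]
    have h1 : ‖(t : ℂ)/4 * x k‖ ≤ t/4 := by
      rw [norm_mul, norm_div, hnt]
      have : ‖(4 : ℂ)‖ = 4 := by norm_num
      rw [this]
      calc t/4 * ‖x k‖ ≤ t/4 * 1 := by
            apply mul_le_mul_of_nonneg_left (hxk k) (by linarith)
        _ = t/4 := by ring
    have h2 : ‖(((1 - t)/4 : ℝ) : ℂ)‖ = (1 - t)/4 := by
      rw [Complex.norm_real, Real.norm_eq_abs, _root_.abs_of_nonneg (by linarith)]
    calc ‖(t : ℂ)/4 * x k + (((1 - t)/4 : ℝ) : ℂ)‖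
        ≤ ‖(t : ℂ)/4 * x k‖ + ‖(((1 - t)/4 : ℝ) : ℂ)‖ := norm_add_le _ _
      _ ≤ t/4 + (1 - t)/4 := by rw [h2]; exact add_le_add_left h1 _
      _ = t ^ 0 / 4 := by ring
  -- g maps D into D
  have hgD : g t '' D ⊆ D := by
    rintro _ ⟨x, hx, rfl⟩
    rw [hD] at hx ⊢
    rcases hx with h0 | hm
    · left
      rw [Set.mem_singleton_iff.1 h0]
      refine Set.mem_singleton_iff.2 (lp.ext (funext fun k => ?_))
      rw [hg]
      rw [show (0 : lp (fun _ : ℕ => ℂ) ⊤) k = 0 from rfl]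
      simp
    · obtain ⟨_, ⟨m, rfl⟩, hm⟩ := hm
      right
      refine Set.mem_iUnion.2 ⟨m + 1, Metric.mem_closedBall.2
        (linfty_dist_le_of_coord _ _ (by positivity) fun k => ?_)⟩
      have hcalc : (g t x) k - (c (m+1)) k
          = (t : ℂ) * Complex.exp ((α k : ℂ) * Complex.I) * (x k - (c m) k) := by
        rw [hg, hc, hc, show (((m+1 : ℕ)) : ℂ) * (α k) * Complex.I
            = (m : ℂ) * (α k) * Complex.I + (α k : ℂ) * Complex.I by push_cast; ring,
          Complex.exp_add]
        ring
      rw [hcalc, norm_mul, norm_mul, hnt, norm_exp_real_mul_I', mul_one]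
      have h1 : ‖x k - (c m) k‖ ≤ t ^ m / 4 :=
        (linfty_coord_dist_le x (c m) k).trans (Metric.mem_closedBall.1 hm)
      calc t * ‖x k - (c m) k‖ ≤ t * (t ^ m / 4) :=
            mul_le_mul_of_nonneg_left h1 ht0
        _ = t ^ (m+1) / 4 := by ring
  -- Lipschitz estimates
  have hLipf : ∀ x y, dist (f t x) (f t y) ≤ t * dist x y := by
    intro x y
    refine linfty_dist_le_of_coord _ _ (mul_nonneg ht0 dist_nonneg) fun k => ?_
    have hcalc : (f t x) k - (f t y) k = (t : ℂ)/4 * (x k - y k) := by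
      rw [hf, hf]; ring
    rw [hcalc, norm_mul]
    have h1 : ‖(t : ℂ)/4‖ ≤ t := by
      rw [norm_div, hnt, show ‖(4 : ℂ)‖ = 4 from by norm_num]
      linarith
    exact mul_le_mul h1 (linfty_coord_dist_le x y k) (norm_nonneg _) ht0
  have hLipg : ∀ x y, dist (g t x) (g t y) ≤ t * dist x y := by
    intro x y
    refine linfty_dist_le_of_coord _ _ (mul_nonneg ht0 dist_nonneg) fun k => ?_
    have hcalc : (g t x) k - (g t y) k
        = (t : ℂ) * Complex.exp ((α k : ℂ) * Complex.I) * (x k - y k) := by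
      rw [hg, hg]; ring
    rw [hcalc, norm_mul, norm_mul, hnt, norm_exp_real_mul_I', mul_one]
    exact mul_le_mul_of_nonneg_left (linfty_coord_dist_le x y k) ht0
  have hfsub : f t '' A ⊆ A := Set.subset_union_left.trans hAinv.subset
  have hgsub : g t '' A ⊆ A := Set.subset_union_right.trans hAinv.subset
  -- `one` is the fixed point of `f t` and belongs to `A`
  have hfix : f t one = one := by
    refine lp.ext (funext fun k => ?_)
    rw [hf, hone]; ring
  have honeA : one ∈ A := by
    obtain ⟨a, ha⟩ := hAne
    have hiter : ∀ n, (f t)^[n] a ∈ A := by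
      intro n; induction n with
      | zero => exact ha
      | succ n ih =>
        rw [Function.iterate_succ_apply']
        exact hfsub ⟨_, ih, rfl⟩
    have hdist : ∀ n, dist ((f t)^[n] a) one ≤ t ^ n * dist a one := by
      intro n; induction n with
      | zero => simp
      | succ n ih =>
        rw [Function.iterate_succ_apply']
        calc dist (f t ((f t)^[n] a)) one = dist (f t ((f t)^[n] a)) (f t one) := by
              rw [hfix]
          _ ≤ t * dist ((f t)^[n] a) one := hLipf _ _
          _ ≤ t * (t ^ n * dist a one) := mul_le_mul_of_nonneg_left ih ht0
          _ = t ^ (n+1) * dist a one := by ring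
    have h0 : Filter.Tendsto (fun n => t ^ n * dist a one) Filter.atTop (nhds 0) := by
      simpa using (tendsto_pow_atTop_nhds_zero_of_lt_one ht0 ht1).mul_const (dist a one)
    have hT : Filter.Tendsto (fun n => (f t)^[n] a) Filter.atTop (nhds one) :=
      tendsto_iff_dist_tendsto_zero.2
        (squeeze_zero (fun n => dist_nonneg) hdist h0)
    exact hAc.isClosed.mem_of_tendsto hT (Filter.Eventually.of_forall hiter)
  -- orbit of `one` under `g t` stays in `A`
  have horbit : ∀ m : ℕ, (g t)^[m] one ∈ A := by
    intro m; induction m with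
    | zero => exact honeA
    | succ m ih =>
      rw [Function.iterate_succ_apply']
      exact hgsub ⟨_, ih, rfl⟩
  -- `D` is closed
  have h0D : (0 : lp (fun _ : ℕ => ℂ) ⊤) ∈ D := by rw [hD]; left; rfl
  have hclosedD : IsClosed D := by
    rw [hD]
    refine isClosed_of_closure_subset ?_
    intro x hx
    by_cases hx0 : x = 0
    · exact Or.inl (by simp [hx0])
    · have hxn : 0 < ‖x‖ := norm_pos_iff.2 hx0
      have hεpos : 0 < ‖x‖ / 2 := by linarith
      obtain ⟨M, hM⟩ := Filter.eventually_atTop.1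
        ((tendsto_pow_atTop_nhds_zero_of_lt_one ht0 ht1).eventually_lt_const hεpos)
      have hD'c : IsClosed ({0} ∪ ⋃ m ∈ Finset.range M,
          Metric.closedBall (c m) (t ^ m / 4) : Set (lp (fun _ : ℕ => ℂ) ⊤)) :=
        isClosed_singleton.union (isClosed_biUnion_finset fun m _ =>
          Metric.isClosed_closedBall)
      have hxD' : x ∈ ({0} ∪ ⋃ m ∈ Finset.range M,
          Metric.closedBall (c m) (t ^ m / 4) : Set (lp (fun _ : ℕ => ℂ) ⊤)) := by
        rw [← hD'c.closure_eq]
        refine Metric.mem_closure_iff.2 fun δ hδ => ?_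
        obtain ⟨y, hyD, hy⟩ := Metric.mem_closure_iff.1 hx (min δ (‖x‖/2))
          (lt_min hδ hεpos)
        refine ⟨y, ?_, hy.trans_le (min_le_left _ _)⟩
        rcases hyD with h0 | hm
        · exact Or.inl h0
        · obtain ⟨_, ⟨m, rfl⟩, hm⟩ := hm
          right
          refine Set.mem_biUnion (Finset.mem_range.2 ?_) hm
          by_contra hMm
          push_neg at hMm
          have h1 : ‖y‖ ≤ t ^ m := hnormS m y hm
          have h2 : t ^ m < ‖x‖/2 := hM m hMm
          have h3 : dist x y < ‖x‖/2 := hy.trans_le (min_le_right _ _)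
          have h4 : ‖x‖ - ‖y‖ ≤ ‖x - y‖ := norm_sub_norm_le x y
          rw [← dist_eq_norm] at h4
          linarith
      rcases hxD' with h0 | hm
      · exact Or.inl h0
      · obtain ⟨m, _, hm⟩ := Set.mem_iUnion₂.1 hm
        exact Or.inr (Set.mem_iUnion.2 ⟨m, hm⟩)
  -- `A ⊆ D`
  have hAD : A ⊆ D := by
    obtain ⟨r, hr⟩ := hAc.isBounded.subset_closedBall 0
    have key : ∀ n : ℕ, ∀ a ∈ A, ∃ d ∈ D, dist a d ≤ t ^ n * r := by
      intro n; induction n with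
      | zero =>
        intro a ha
        exact ⟨0, h0D, by simpa using Metric.mem_closedBall.1 (hr ha)⟩
      | succ n ih =>
        intro a ha
        rw [← hAinv] at ha
        rcases ha with ⟨b, hb, rfl⟩ | ⟨b, hb, rfl⟩
        · obtain ⟨d, hdD, hdist⟩ := ih b hb
          refine ⟨f t d, hfD ⟨d, hdD, rfl⟩, ?_⟩
          calc dist (f t b) (f t d) ≤ t * dist b d := hLipf b d
            _ ≤ t * (t ^ n * r) := mul_le_mul_of_nonneg_left hdist ht0
            _ = t ^ (n+1) * r := by ring
        · obtain ⟨d, hdD, hdist⟩ := ih b hb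
          refine ⟨g t d, hgD ⟨d, hdD, rfl⟩, ?_⟩
          calc dist (g t b) (g t d) ≤ t * dist b d := hLipg b d
            _ ≤ t * (t ^ n * r) := mul_le_mul_of_nonneg_left hdist ht0
            _ = t ^ (n+1) * r := by ring
    intro a ha
    have hcl : a ∈ closure D := by
      refine Metric.mem_closure_iff.2 fun ε hε => ?_
      have hTr : Filter.Tendsto (fun n => t ^ n * r) Filter.atTop (nhds 0) := by
        simpa using (tendsto_pow_atTop_nhds_zero_of_lt_one ht0 ht1).mul_const r
      obtain ⟨n, hn⟩ := (hTr.eventually_lt_const hε).exists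
      obtain ⟨d, hdD, hdist⟩ := key n a ha
      exact ⟨d, hdD, lt_of_le_of_lt hdist hn⟩
    rwa [hclosedD.closure_eq] at hcl
  exact ⟨hfD, hgD, hAD, horbit⟩
end
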